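/- arXiv:2112.02327 — 3 statements merged into one kernel-verified Lean document; each statement's English description precedes it below -/
import Mathlib

section
/- Let N≥2, 1*=N/(N−1), let φ be the indicator function of {x∈R^N : 1<|x|≤2}, let v_i(x) = 2^{i(N−1)}φ(2^i x) and u_n = (1/n)Σ_{i=1}^n v_i. Then ‖u_n‖_{L^{1*}(R^N)}^{1*} = n^{1−1*}‖φ‖_{L^{1*}(R^N)}^{1*}; in particular u_n → 0 strongly in L^{1*}(R^N) as n→∞, and moreover ‖u_n‖_{L^{1*,q}(R^N)} → 0 for every q∈(1,∞]. -/
open MeasureTheory Set Filter Topology ENNReal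

noncomputable section

abbrev Euc (N : ℕ) := EuclideanSpace ℝ (Fin N)

/-- Decreasing rearrangement of `u` with respect to Lebesgue measure on `ℝ^N`. -/
def rearr (N : ℕ) (u : Euc N → ℝ) (t : ℝ) : ℝ :=
  sInf {l : ℝ | 0 < l ∧ volume {x : Euc N | l < |u x|} ≤ ENNReal.ofReal t}

/-- Lorentz quasinorm `‖u‖_{L^{p,q}}` on `ℝ^N` (with `q = ∞` allowed). -/
def lorentz (N : ℕ) (p : ℝ) (q : ℝ≥0∞) (u : Euc N → ℝ) : ℝ≥0∞ :=
  if q = ∞ then ⨆ t ∈ Ioi (0:ℝ), ENNReal.ofReal (t ^ (1/p) * rearr N u t)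
  else (∫⁻ t in Ioi (0:ℝ),
      ENNReal.ofReal ((t ^ (1/p) * rearr N u t) ^ q.toReal / t)) ^ (1 / q.toReal)

/-- Divergence of a vector field on `ℝ^N`. -/
def divg (N : ℕ) (v : Euc N → Euc N) (x : Euc N) : ℝ :=
  ∑ i : Fin N, fderiv ℝ v x (EuclideanSpace.single i 1) i

/-- Total variation `‖Du‖_Ω` of `u` over a set `Ω`. -/
def TV (N : ℕ) (u : Euc N → ℝ) (Ω : Set (Euc N)) : ℝ≥0∞ :=
  ⨆ (v : Euc N → Euc N) (_ : ContDiff ℝ (⊤ : ℕ∞) v) (_ : HasCompactSupport v)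
    (_ : ∀ x, ‖v x‖ ≤ 1) (_ : tsupport v ⊆ Ω),
    ENNReal.ofReal (∫ x, u x * divg N v x)

/-- `u` vanishes at infinity. -/
def VanishAtInfinity (N : ℕ) (u : Euc N → ℝ) : Prop :=
  ∀ M : ℝ, 0 < M → volume {x : Euc N | M < |u x|} < ∞

/-- Membership in `BV̇(ℝ^N)`. -/
def MemBVdot (N : ℕ) (u : Euc N → ℝ) : Prop :=
  Measurable u ∧ VanishAtInfinity N u ∧ TV N u univ < ∞

/-- The rescaling `g[j,y]u = 2^{(N-1)j} u (2^j (· - y))`. -/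
def resc (N : ℕ) (j : ℤ) (y : Euc N) (u : Euc N → ℝ) : Euc N → ℝ :=
  fun x => (2:ℝ) ^ (((N:ℤ) - 1) * j) * u ((2:ℝ) ^ j • (x - y))

/-- Weak convergence `u k ⇀ w` in `BV̇(ℝ^N)`. -/
def WeakBVconv (N : ℕ) (u : ℕ → Euc N → ℝ) (w : Euc N → ℝ) : Prop :=
  (∀ K : Set (Euc N), IsCompact K →
      Tendsto (fun k => ∫ x in K, |u k x - w x|) atTop (𝓝 0)) ∧
  ∀ i : Fin N, ∀ f : Euc N → ℝ, ContDiff ℝ (⊤ : ℕ∞) f → HasCompactSupport f →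
      Tendsto (fun k => ∫ x, u k x * fderiv ℝ f x (EuclideanSpace.single i 1)) atTop
        (𝓝 (∫ x, w x * fderiv ℝ f x (EuclideanSpace.single i 1)))

/-- The annulus `{x ∈ ℝ^N : 1 < |x| ≤ 2}`. -/
def ann (N : ℕ) : Set (Euc N) := {x : Euc N | 1 < ‖x‖ ∧ ‖x‖ ≤ 2}

/-- `φ`, the indicator function of the annulus `{1 < |x| ≤ 2}`. -/
def phiAnn (N : ℕ) : Euc N → ℝ := (ann N).indicator (fun _ => 1)

/-- `v_i(x) = 2^{i(N-1)} φ(2^i x)`. -/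
def vfun (N i : ℕ) (x : Euc N) : ℝ := (2:ℝ) ^ (i * (N - 1)) * phiAnn N ((2:ℝ) ^ i • x)

/-- `u_n = (1/n) Σ_{i=1}^n v_i`. -/
def ufun (N n : ℕ) (x : Euc N) : ℝ := (1 / (n:ℝ)) * ∑ i ∈ Finset.Icc 1 n, vfun N i x


section AuxCE16

open Metric

variable {N : ℕ}

lemma norm_pow_smul (i : ℕ) (x : Euc N) : ‖(2:ℝ)^i • x‖ = 2^i * ‖x‖ := by
  rw [norm_smul, Real.norm_eq_abs, abs_of_pos (by positivity)]

lemma phiAnn_apply (N : ℕ) (x : Euc N) :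
    phiAnn N x = if 1 < ‖x‖ ∧ ‖x‖ ≤ 2 then 1 else 0 := by
  simp only [phiAnn, Set.indicator_apply, ann, Set.mem_setOf_eq]

lemma phiAnn_nonneg (N : ℕ) (x : Euc N) : 0 ≤ phiAnn N x := by
  rw [phiAnn_apply]; split <;> norm_num

lemma phiAnn_le_one (N : ℕ) (x : Euc N) : phiAnn N x ≤ 1 := by
  rw [phiAnn_apply]; split <;> norm_num

lemma vfun_nonneg (N i : ℕ) (x : Euc N) : 0 ≤ vfun N i x :=
  mul_nonneg (by positivity) (phiAnn_nonneg _ _)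

lemma vfun_le (N i : ℕ) (x : Euc N) : vfun N i x ≤ 2 ^ (i * (N - 1)) := by
  calc vfun N i x ≤ 2 ^ (i * (N-1)) * 1 :=
        mul_le_mul_of_nonneg_left (phiAnn_le_one _ _) (by positivity)
  _ = 2 ^ (i * (N-1)) := mul_one _

lemma vfun_pos_cond {i : ℕ} {x : Euc N} (h : vfun N i x ≠ 0) :
    1 < (2:ℝ)^i * ‖x‖ ∧ (2:ℝ)^i * ‖x‖ ≤ 2 := by
  rw [vfun, phiAnn_apply, norm_pow_smul] at h
  by_contra hc
  apply h
  rw [if_neg hc, mul_zero]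

lemma vfun_eq_zero {k i : ℕ} {x : Euc N} (hik : i < k) (hx : 1 < (2:ℝ)^i * ‖x‖) :
    vfun N k x = 0 := by
  by_contra h
  obtain ⟨h1, h2⟩ := vfun_pos_cond h
  have hxpos : 0 < ‖x‖ := by
    by_contra hx0
    push_neg at hx0
    nlinarith [pow_pos (show (0:ℝ) < 2 by norm_num) i]
  have hpow : (2:ℝ)^k = 2^(k-i) * 2^i := by rw [← pow_add]; congr 1; omega
  have h2le : (2:ℝ) ≤ 2^(k-i) := by
    calc (2:ℝ) = 2^1 := (pow_one 2).symm
    _ ≤ 2^(k-i) := pow_le_pow_right₀ (by norm_num) (by omega)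
  have hi0 : (0:ℝ) < 2^(k-i) := by positivity
  nlinarith [mul_lt_mul_of_pos_left hx hi0]

lemma geomTwo_le {d : ℕ} (hd : 1 ≤ d) (i : ℕ) :
    ∑ k ∈ Finset.Icc 1 i, (2:ℝ) ^ (k * d) ≤ 2 * 2 ^ (i * d) := by
  induction i with
  | zero => simp
  | succ i ih =>
    rw [Finset.sum_Icc_succ_top (by omega)]
    have hstep : (2:ℝ) * 2 ^ (i * d) ≤ 2 ^ ((i+1) * d) := by
      have h1 : (2:ℝ) ^ (i*d+1) ≤ 2 ^ ((i+1)*d) := by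
        apply pow_le_pow_right₀ (by norm_num)
        have : (i+1)*d = i*d + d := by ring
        omega
      calc (2:ℝ) * 2^(i*d) = 2^(i*d+1) := by rw [pow_succ]; ring
      _ ≤ _ := h1
    nlinarith [ih]

lemma ufun_nonneg (N n : ℕ) (x : Euc N) : 0 ≤ ufun N n x :=
  mul_nonneg (by positivity) (Finset.sum_nonneg fun i _ => vfun_nonneg N i x)

lemma abs_ufun_le_global (hN : 2 ≤ N) (n : ℕ) (x : Euc N) :
    |ufun N n x| ≤ 2 / n * 2 ^ (n * (N-1)) := by
  rw [abs_of_nonneg (ufun_nonneg N n x), ufun]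
  have h1 : ∑ k ∈ Finset.Icc 1 n, vfun N k x ≤ 2 * 2 ^ (n*(N-1)) := by
    refine le_trans (Finset.sum_le_sum fun k _ => vfun_le N k x) (geomTwo_le (by omega) n)
  have hn0 : (0:ℝ) ≤ 1 / n := by positivity
  calc (1/(n:ℝ)) * ∑ k ∈ Finset.Icc 1 n, vfun N k x
      ≤ (1/(n:ℝ)) * (2 * 2 ^ (n*(N-1))) := mul_le_mul_of_nonneg_left h1 hn0
  _ = 2 / n * 2 ^ (n*(N-1)) := by ring

lemma abs_ufun_le_local (hN : 2 ≤ N) (n i : ℕ) (x : Euc N)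
    (hx : 1 < (2:ℝ)^i * ‖x‖) :
    |ufun N n x| ≤ 2 / n * 2 ^ (i * (N-1)) := by
  rw [abs_of_nonneg (ufun_nonneg N n x), ufun]
  have h1 : ∑ k ∈ Finset.Icc 1 n, vfun N k x ≤ 2 * 2 ^ (i*(N-1)) := by
    calc ∑ k ∈ Finset.Icc 1 n, vfun N k x
        ≤ ∑ k ∈ Finset.Icc 1 n, (if k ≤ i then (2:ℝ)^(k*(N-1)) else 0) := by
          apply Finset.sum_le_sum
          intro k _
          by_cases hki : k ≤ i
          · rw [if_pos hki]; exact vfun_le N k x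
          · rw [if_neg hki, vfun_eq_zero (by omega) hx]
      _ = ∑ k ∈ (Finset.Icc 1 n).filter (· ≤ i), (2:ℝ)^(k*(N-1)) :=
          (Finset.sum_filter _ _).symm
      _ ≤ ∑ k ∈ Finset.Icc 1 i, (2:ℝ)^(k*(N-1)) := by
          apply Finset.sum_le_sum_of_subset_of_nonneg
          · intro k hk
            simp only [Finset.mem_filter, Finset.mem_Icc] at *
            omega
          · intros; positivity
      _ ≤ 2 * 2^(i*(N-1)) := geomTwo_le (by omega) i
  have hn0 : (0:ℝ) ≤ 1 / n := by positivity
  calc (1/(n:ℝ)) * ∑ k ∈ Finset.Icc 1 n, vfun N k x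
      ≤ (1/(n:ℝ)) * (2 * 2 ^ (i*(N-1))) := mul_le_mul_of_nonneg_left h1 hn0
  _ = 2 / n * 2 ^ (i*(N-1)) := by ring

lemma ufun_norm_le_one (hN : 2 ≤ N) {n : ℕ} {x : Euc N} (h : ufun N n x ≠ 0) :
    ‖x‖ ≤ 1 := by
  by_contra hx
  push_neg at hx
  apply h
  rw [ufun, Finset.sum_eq_zero, mul_zero]
  intro k hk
  rw [Finset.mem_Icc] at hk
  exact vfun_eq_zero (i := 0) (by omega) (by simpa using hx)

lemma rearr_nonneg (N : ℕ) (u : Euc N → ℝ) (t : ℝ) : 0 ≤ rearr N u t :=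
  Real.sInf_nonneg fun _ hx => hx.1.le

lemma rearr_le {u : Euc N → ℝ} {t l : ℝ} (hl : 0 < l)
    (h : volume {x : Euc N | l < |u x|} ≤ ENNReal.ofReal t) : rearr N u t ≤ l :=
  csInf_le ⟨0, fun _ hy => hy.1.le⟩ ⟨hl, h⟩

lemma meas_ufun_le (hN : 2 ≤ N) (n i : ℕ) :
    volume {x : Euc N | 2/n * 2^(i*(N-1)) < |ufun N n x|}
      ≤ ENNReal.ofReal ((((2:ℝ)^i)⁻¹)^N) * volume (Metric.ball (0:Euc N) 1) := by
  have hsub : {x : Euc N | 2/n * 2^(i*(N-1)) < |ufun N n x|}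
      ⊆ Metric.closedBall 0 (((2:ℝ)^i)⁻¹) := by
    intro x hx
    simp only [Set.mem_setOf_eq] at hx
    rw [Metric.mem_closedBall, dist_zero_right]
    by_contra hc
    push_neg at hc
    have h1 : 1 < (2:ℝ)^i * ‖x‖ := by
      have h2 : (0:ℝ) < 2^i := by positivity
      calc (1:ℝ) = 2^i * ((2:ℝ)^i)⁻¹ := by field_simp
      _ < 2^i * ‖x‖ := mul_lt_mul_of_pos_left hc h2
    exact absurd hx (not_lt.2 (abs_ufun_le_local hN n i x h1))
  calc volume {x : Euc N | 2/n * 2^(i*(N-1)) < |ufun N n x|}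
      ≤ volume (Metric.closedBall (0:Euc N) (((2:ℝ)^i)⁻¹)) := measure_mono hsub
  _ = ENNReal.ofReal ((((2:ℝ)^i)⁻¹)^N) * volume (Metric.ball (0:Euc N) 1) := by
      rw [Measure.addHaar_closedBall _ _ (by positivity), finrank_euclideanSpace_fin]

lemma rearr_step (hN : 2 ≤ N) {n : ℕ} (hn : 1 ≤ n) (i : ℕ) {t : ℝ}
    (ht : (((2:ℝ)^i)⁻¹)^N * (volume (Metric.ball (0:Euc N) 1)).toReal ≤ t) :
    rearr N (ufun N n) t ≤ 2/n * 2^(i*(N-1)) := by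
  have hn0 : (0:ℝ) < n := by exact_mod_cast hn
  apply rearr_le (by positivity)
  calc volume {x : Euc N | 2/n * 2^(i*(N-1)) < |ufun N n x|}
      ≤ ENNReal.ofReal ((((2:ℝ)^i)⁻¹)^N) * volume (Metric.ball (0:Euc N) 1) :=
        meas_ufun_le hN n i
  _ = ENNReal.ofReal ((((2:ℝ)^i)⁻¹)^N * (volume (Metric.ball (0:Euc N) 1)).toReal) := by
      rw [ENNReal.ofReal_mul (by positivity), ENNReal.ofReal_toReal measure_ball_lt_top.ne]
  _ ≤ ENNReal.ofReal t := ENNReal.ofReal_le_ofReal ht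

lemma rearr_global (hN : 2 ≤ N) {n : ℕ} (hn : 1 ≤ n) {t : ℝ} (ht : 0 < t) :
    rearr N (ufun N n) t ≤ 2/n * 2^(n*(N-1)) := by
  have hn0 : (0:ℝ) < n := by exact_mod_cast hn
  apply rearr_le (by positivity)
  have hempty : {x : Euc N | 2/n * 2^(n*(N-1)) < |ufun N n x|} = ∅ :=
    Set.eq_empty_of_forall_notMem fun x hx =>
      absurd hx (not_lt.2 (abs_ufun_le_global hN n x))
  simp [hempty]

lemma rearr_zero (hN : 2 ≤ N) (n : ℕ) {t : ℝ}
    (ht : (volume (Metric.ball (0:Euc N) 1)).toReal ≤ t) :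
    rearr N (ufun N n) t = 0 := by
  have hset : {l : ℝ | 0 < l ∧ volume {x : Euc N | l < |ufun N n x|} ≤ ENNReal.ofReal t}
      = Set.Ioi 0 := by
    ext l
    simp only [Set.mem_setOf_eq, Set.mem_Ioi, and_iff_left_iff_imp]
    intro hl
    calc volume {x : Euc N | l < |ufun N n x|}
        ≤ volume (Metric.closedBall (0:Euc N) 1) := by
          apply measure_mono
          intro x hx
          rw [Set.mem_setOf_eq] at hx
          rw [Metric.mem_closedBall, dist_zero_right]
          apply ufun_norm_le_one hN
          intro h0
          rw [h0, abs_zero] at hx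
          exact absurd hx (not_lt.2 hl.le)
      _ = volume (Metric.ball (0:Euc N) 1) := by
          rw [Measure.addHaar_closedBall _ _ (by norm_num : (0:ℝ) ≤ 1)]
          simp
      _ ≤ ENNReal.ofReal t := by
          rw [← ENNReal.ofReal_toReal (measure_ball_lt_top (x := (0:Euc N)) (r := 1)).ne]
          exact ENNReal.ofReal_le_ofReal ht
  rw [rearr, hset, csInf_Ioi]

lemma abs_rpow_sum {ι : Type*} (s : Finset ι) (f : ι → ℝ) (p : ℝ) (hp : p ≠ 0)
    (h : ∀ i ∈ s, ∀ j ∈ s, f i ≠ 0 → f j ≠ 0 → i = j) :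
    |∑ i ∈ s, f i| ^ p = ∑ i ∈ s, |f i| ^ p := by
  by_cases h0 : ∀ i ∈ s, f i = 0
  · rw [Finset.sum_eq_zero h0, abs_zero, Real.zero_rpow hp,
      Finset.sum_eq_zero fun i hi => by rw [h0 i hi, abs_zero, Real.zero_rpow hp]]
  · push_neg at h0
    obtain ⟨i₀, hi₀s, hi₀⟩ := h0
    rw [Finset.sum_eq_single_of_mem i₀ hi₀s
        (fun j hj hji => by
          by_contra hfj
          exact hji (h j hj i₀ hi₀s hfj hi₀)),
      Finset.sum_eq_single_of_mem i₀ hi₀s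
        (fun j hj hji => by
          have hfj : f j = 0 := by
            by_contra hfj
            exact hji (h j hj i₀ hi₀s hfj hi₀)
          rw [hfj, abs_zero, Real.zero_rpow hp])]


lemma two_pow_mul_rpow (hN : 2 ≤ N) (m : ℕ) :
    ((2:ℝ)^(m*N)) ^ (((N:ℝ)-1)/N) = (2:ℝ)^(m*(N-1)) := by
  rw [← Real.rpow_natCast 2 (m*N), ← Real.rpow_mul (by norm_num), ← Real.rpow_natCast 2 (m*(N-1))]
  congr 1
  have hN0 : (N:ℝ) ≠ 0 := by positivity
  push_cast [Nat.cast_sub (show 1 ≤ N by omega)]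
  field_simp

lemma rearr_mid (hN : 2 ≤ N) {n : ℕ} (hn : 1 ≤ n) {t : ℝ} (ht0 : 0 < t)
    (htV : t ≤ (volume (Metric.ball (0:Euc N) 1)).toReal) :
    rearr N (ufun N n) t ≤
      2^N * (volume (Metric.ball (0:Euc N) 1)).toReal ^ (((N:ℝ)-1)/N) / n
        * t ^ (-(((N:ℝ)-1)/N)) := by
  have hV₀ : 0 < (volume (Metric.ball (0:Euc N) 1)).toReal :=
    ENNReal.toReal_pos (Metric.measure_ball_pos volume 0 one_pos).ne'
      measure_ball_lt_top.ne
  set V₀ : ℝ := (volume (Metric.ball (0:Euc N) 1)).toReal with hVdef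
  have hN1 : (1:ℝ) < (N:ℝ) := by exact_mod_cast (by omega : 1 < N)
  have he0 : 0 < ((N:ℝ)-1)/N := by
    apply div_pos (by linarith) (by linarith)
  set e : ℝ := ((N:ℝ)-1)/N with hedef
  have hn0 : (0:ℝ) < n := by exact_mod_cast hn
  rcases eq_or_lt_of_le htV with heq | hlt
  · rw [rearr_zero hN n (le_of_eq heq.symm)]
    positivity
  · have hex : ∃ m : ℕ, (((2:ℝ)^m)⁻¹)^N * V₀ ≤ t := by
      obtain ⟨m, hm⟩ := pow_unbounded_of_one_lt (V₀/t) (one_lt_two (α := ℝ))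
      refine ⟨m, ?_⟩
      have h2m : (1:ℝ) ≤ 2^m := one_le_pow₀ (by norm_num)
      have hmN : (2:ℝ)^m ≤ ((2:ℝ)^m)^N := le_self_pow₀ h2m (by omega)
      rw [inv_pow, inv_mul_le_iff₀ (by positivity)]
      calc V₀ = (V₀/t)*t := by field_simp
      _ ≤ 2^m * t := by nlinarith
      _ ≤ ((2:ℝ)^m)^N * t := by nlinarith
    set i := Nat.find hex with hidef
    have hi : (((2:ℝ)^i)⁻¹)^N * V₀ ≤ t := Nat.find_spec hex
    have hbound := rearr_step hN hn i hi
    rcases Nat.eq_zero_or_pos i with hi0 | hipos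
    · rw [hi0] at hi
      simp only [pow_zero, inv_one, one_pow, one_mul] at hi
      linarith
    · have hnot : ¬ ((((2:ℝ)^(i-1))⁻¹)^N * V₀ ≤ t) := Nat.find_min hex (by omega)
      push_neg at hnot
      have hX : (0:ℝ) < 2^((i-1)*N) := by positivity
      have h1 : t * (2:ℝ)^((i-1)*N) < V₀ := by
        rw [inv_pow, ← pow_mul] at hnot
        calc t * (2:ℝ)^((i-1)*N)
            < ((2:ℝ)^((i-1)*N))⁻¹ * V₀ * 2^((i-1)*N) := by
              exact mul_lt_mul_of_pos_right hnot hX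
        _ = V₀ := by field_simp
      have hpow1 : ((2:ℝ)^((i-1)*N)) ≤ V₀ / t := by
        rw [le_div_iff₀ ht0]
        nlinarith
      have hpow2 : ((2:ℝ)^((i-1)*(N-1))) ≤ (V₀/t)^e := by
        have := Real.rpow_le_rpow (by positivity) hpow1 he0.le
        rwa [two_pow_mul_rpow hN (i-1)] at this
      have hsplit : (2:ℝ)^(i*(N-1)) = 2^(N-1) * 2^((i-1)*(N-1)) := by
        rw [← pow_add]
        congr 1
        calc i*(N-1) = ((i-1)+1)*(N-1) := by congr 1; omega
        _ = (N-1) + (i-1)*(N-1) := by rw [Nat.succ_mul]; omega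
      have h2N : (2:ℝ) * 2^(N-1) = 2^N := by
        rw [← pow_succ']
        congr 1
        omega
      calc rearr N (ufun N n) t ≤ 2/n * 2^(i*(N-1)) := hbound
      _ = (2 * 2^(N-1) / n) * 2^((i-1)*(N-1)) := by rw [hsplit]; ring
      _ ≤ (2 * 2^(N-1) / n) * (V₀/t)^e := by
          apply mul_le_mul_of_nonneg_left hpow2 (by positivity)
      _ = 2^N * V₀^e / n * t^(-e) := by
          rw [Real.div_rpow hV₀.le ht0.le, Real.rpow_neg ht0.le, h2N]
          ring

end AuxCE16

/-- `‖u_n‖_{L^{1*}}^{1*} = n^{1-1*} ‖φ‖_{L^{1*}}^{1*}`, hence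
`u_n → 0` in `L^{1*}(ℝ^N)` and `u_n → 0` in `L^{1*,q}(ℝ^N)` for every `q ∈ (1,∞]`. -/
theorem counterexample_sequence_to_zero_in_L1star
    (N : ℕ) (hN : 2 ≤ N) :
    (∀ n : ℕ, 1 ≤ n →
      ∫ x : Euc N, |ufun N n x| ^ ((N : ℝ) / ((N : ℝ) - 1))
        = (n : ℝ) ^ (1 - (N : ℝ) / ((N : ℝ) - 1))
          * ∫ x : Euc N, |phiAnn N x| ^ ((N : ℝ) / ((N : ℝ) - 1))) ∧
    Tendsto (fun n => ∫ x : Euc N, |ufun N n x| ^ ((N : ℝ) / ((N : ℝ) - 1)))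
      atTop (𝓝 0) ∧
    ∀ q : ℝ≥0∞, 1 < q →
      Tendsto (fun n => lorentz N ((N : ℝ) / ((N : ℝ) - 1)) q (ufun N n)) atTop (𝓝 0) := by
  have hN1 : (1:ℝ) < (N:ℝ) := by exact_mod_cast (by omega : 1 < N)
  have hNm1 : (0:ℝ) < (N:ℝ) - 1 := by linarith
  have hNpos : (0:ℝ) < (N:ℝ) := by linarith
  set p : ℝ := (N:ℝ)/((N:ℝ)-1) with hpdef
  have hp1 : 1 < p := by
    rw [hpdef, lt_div_iff₀ hNm1]; linarith
  have hp0 : p ≠ 0 := by positivity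
  -- pointwise facts about powers of phi
  have hphi_rpow : ∀ x : Euc N, |phiAnn N x| ^ p = phiAnn N x := by
    intro x
    rw [phiAnn_apply]
    split
    · rw [abs_one, Real.one_rpow]
    · rw [abs_zero, Real.zero_rpow hp0]
  have hexp1 : ∀ i : ℕ, ((2:ℝ)^(i*(N-1)))^p = (2:ℝ)^(i*N) := by
    intro i
    rw [← Real.rpow_natCast 2 (i*(N-1)), ← Real.rpow_mul (by norm_num),
      ← Real.rpow_natCast 2 (i*N)]
    congr 1
    have hNe : (N:ℝ) - 1 ≠ 0 := by linarith
    push_cast [Nat.cast_sub (show 1 ≤ N by omega)]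
    rw [hpdef]
    field_simp
  have hdisj : ∀ (x : Euc N) (i j : ℕ), vfun N i x ≠ 0 → vfun N j x ≠ 0 → i = j := by
    intro x i j hi hj
    obtain ⟨hi1, _⟩ := vfun_pos_cond hi
    obtain ⟨hj1, _⟩ := vfun_pos_cond hj
    by_contra hij
    rcases Nat.lt_or_ge i j with h | h
    · exact hj (vfun_eq_zero h hi1)
    · exact hi (vfun_eq_zero (by omega) hj1)
  have hpt : ∀ (n : ℕ) (x : Euc N), |ufun N n x| ^ p
      = (1/(n:ℝ))^p * ∑ i ∈ Finset.Icc 1 n, ((2:ℝ)^(i*N) * phiAnn N ((2:ℝ)^i • x)) := by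
    intro n x
    rw [ufun, abs_mul, Real.mul_rpow (abs_nonneg _) (abs_nonneg _),
      abs_of_nonneg (show (0:ℝ) ≤ 1/(n:ℝ) by positivity)]
    congr 1
    rw [abs_rpow_sum _ _ p hp0 (fun i _ j _ => hdisj x i j)]
    apply Finset.sum_congr rfl
    intro i _
    rw [vfun, abs_mul, Real.mul_rpow (abs_nonneg _) (abs_nonneg _),
      abs_of_nonneg (show (0:ℝ) ≤ (2:ℝ)^(i*(N-1)) by positivity), hexp1 i,
      hphi_rpow]
  -- integrability of phi
  have hann_meas : MeasurableSet (ann N) := by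
    have h1 : MeasurableSet {x : Euc N | 1 < ‖x‖} :=
      measurableSet_lt measurable_const measurable_norm
    have h2 : MeasurableSet {x : Euc N | ‖x‖ ≤ 2} :=
      measurableSet_le measurable_norm measurable_const
    have hA : ann N = {x : Euc N | 1 < ‖x‖} ∩ {x : Euc N | ‖x‖ ≤ 2} := rfl
    rw [hA]
    exact h1.inter h2
  have hphi_int : Integrable (phiAnn N) volume := by
    unfold phiAnn
    rw [integrable_indicator_iff hann_meas]
    refine integrableOn_const (ne_of_lt ?_) (by simp)
    apply lt_of_le_of_lt (measure_mono ?_)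
      (measure_closedBall_lt_top (x := (0:Euc N)) (r := 2))
    intro x hx
    exact Metric.mem_closedBall.2 (by rw [dist_zero_right]; exact hx.2)
  have hIcomp : ∀ i : ℕ, ∫ x : Euc N, phiAnn N ((2:ℝ)^i • x)
      = ((2:ℝ)^(i*N))⁻¹ * ∫ x : Euc N, phiAnn N x := by
    intro i
    rw [Measure.integral_comp_smul volume (phiAnn N) ((2:ℝ)^i),
      finrank_euclideanSpace_fin, smul_eq_mul, ← pow_mul,
      abs_of_nonneg (by positivity)]
  have key1 : ∀ n : ℕ, 1 ≤ n →
      ∫ x : Euc N, |ufun N n x| ^ p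
        = (n:ℝ)^(1-p) * ∫ x : Euc N, |phiAnn N x| ^ p := by
    intro n hn
    have hn0 : (0:ℝ) < n := by exact_mod_cast hn
    calc ∫ x : Euc N, |ufun N n x| ^ p
        = ∫ x : Euc N, (1/(n:ℝ))^p
            * ∑ i ∈ Finset.Icc 1 n, ((2:ℝ)^(i*N) * phiAnn N ((2:ℝ)^i • x)) := by
          simp only [hpt]
      _ = (1/(n:ℝ))^p * ∫ x : Euc N,
            ∑ i ∈ Finset.Icc 1 n, ((2:ℝ)^(i*N) * phiAnn N ((2:ℝ)^i • x)) :=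
          integral_const_mul _ _
      _ = (1/(n:ℝ))^p * ∑ i ∈ Finset.Icc 1 n,
            ∫ x : Euc N, (2:ℝ)^(i*N) * phiAnn N ((2:ℝ)^i • x) := by
          congr 1
          apply integral_finset_sum
          intro i _
          exact ((integrable_comp_smul_iff volume (phiAnn N)
            (show ((2:ℝ)^i) ≠ 0 by positivity)).2 hphi_int).const_mul _
      _ = (1/(n:ℝ))^p * ∑ _i ∈ Finset.Icc 1 n, ∫ x : Euc N, phiAnn N x := by
          congr 1
          apply Finset.sum_congr rfl
          intro i _
          rw [integral_const_mul, hIcomp i, ← mul_assoc,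
            mul_inv_cancel₀ (by positivity), one_mul]
      _ = (1/(n:ℝ))^p * ((n:ℝ) * ∫ x : Euc N, phiAnn N x) := by
          rw [Finset.sum_const, Nat.card_Icc]
          simp [nsmul_eq_mul]
      _ = (n:ℝ)^(1-p) * ∫ x : Euc N, |phiAnn N x| ^ p := by
          simp only [hphi_rpow]
          rw [← mul_assoc]
          congr 1
          rw [one_div, ← Real.rpow_neg_one (n:ℝ), ← Real.rpow_mul (Nat.cast_nonneg n)]
          nth_rewrite 2 [← Real.rpow_one (n:ℝ)]
          rw [← Real.rpow_add hn0]
          congr 1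
          ring
  refine ⟨key1, ?_, ?_⟩
  · -- strong convergence of the p-th powers
    have h1 : Tendsto (fun n : ℕ => (n:ℝ)^(1-p)) atTop (𝓝 0) := by
      have h2 := (tendsto_rpow_neg_atTop (show (0:ℝ) < p - 1 by linarith)).comp
        (tendsto_natCast_atTop_atTop (R := ℝ))
      simpa [Function.comp_def, neg_sub] using h2
    have h0 : Tendsto (fun n : ℕ => (n:ℝ)^(1-p) * ∫ x : Euc N, |phiAnn N x|^p)
        atTop (𝓝 0) := by
      simpa using h1.mul_const _
    apply h0.congr'
    filter_upwards [eventually_ge_atTop 1] with n hn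
    exact (key1 n hn).symm
  · -- Lorentz norm convergence
    intro q hq
    have hpe : 1/p = ((N:ℝ)-1)/N := by rw [hpdef, one_div_div]
    have he0 : 0 < ((N:ℝ)-1)/N := div_pos hNm1 hNpos
    set e : ℝ := ((N:ℝ)-1)/N with hedef
    have hV₀ : 0 < (volume (Metric.ball (0:Euc N) 1)).toReal :=
      ENNReal.toReal_pos (Metric.measure_ball_pos volume 0 one_pos).ne'
        measure_ball_lt_top.ne
    set V₀ : ℝ := (volume (Metric.ball (0:Euc N) 1)).toReal with hVdef
    by_cases hqt : q = ⊤
    · -- q = ∞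
      subst hqt
      have hlor : ∀ n : ℕ, lorentz N p ⊤ (ufun N n)
          = ⨆ t ∈ Ioi (0:ℝ), ENNReal.ofReal (t ^ (1/p) * rearr N (ufun N n) t) := by
        intro n; rw [lorentz, if_pos rfl]
      apply tendsto_of_tendsto_of_tendsto_of_le_of_le' tendsto_const_nhds
        (h := fun n : ℕ => ENNReal.ofReal (2^N * V₀^e / (n:ℝ)))
        ?_ (Eventually.of_forall fun n => zero_le) ?_
      · have hreal : Tendsto (fun n : ℕ => 2^N * V₀^e / (n:ℝ)) atTop (𝓝 0) :=
          tendsto_const_div_atTop_nhds_zero_nat _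
        simpa using ENNReal.tendsto_ofReal hreal
      · filter_upwards [eventually_ge_atTop 1] with n hn
        rw [hlor n]
        apply iSup₂_le
        intro t ht
        rw [Set.mem_Ioi] at ht
        apply ENNReal.ofReal_le_ofReal
        rw [hpe]
        rcases le_or_gt V₀ t with hVt | htV
        · rw [rearr_zero hN n hVt, mul_zero]
          positivity
        · have hr := rearr_mid hN hn ht htV.le
          have hone : t^e * t^(-e) = 1 := by
            rw [← Real.rpow_add ht, add_neg_cancel, Real.rpow_zero]
          calc t^e * rearr N (ufun N n) t
              ≤ t^e * (2^N * V₀^e / (n:ℝ) * t^(-e)) :=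
                mul_le_mul_of_nonneg_left hr (Real.rpow_nonneg ht.le e)
          _ = 2^N * V₀^e / (n:ℝ) * (t^e * t^(-e)) := by ring
          _ = 2^N * V₀^e / (n:ℝ) := by rw [hone, mul_one]
    · -- finite q
      have hr1 : 1 < q.toReal := by
        rw [← ENNReal.toReal_one]
        exact (ENNReal.toReal_lt_toReal (by simp) hqt).2 hq
      set r : ℝ := q.toReal with hrdef
      have hr0 : (0:ℝ) < r := by linarith
      set β : ℝ := r * e with hbetadef
      have hβ0 : 0 < β := by positivity
      set K : ℝ := (2*V₀^e)^r/β + (2^N*V₀^e)^r * N * Real.log 2 with hKdef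
      have hlog2 : (0:ℝ) ≤ Real.log 2 := Real.log_nonneg one_le_two
      have hK0 : 0 ≤ K := by
        apply add_nonneg
        · positivity
        · exact mul_nonneg (mul_nonneg (by positivity) (by positivity)) hlog2
      have hcastE : ∀ m : ℕ, ((m*N : ℕ):ℝ) * e = ((m*(N-1) : ℕ):ℝ) := by
        intro m
        rw [hedef]
        push_cast [Nat.cast_sub (show 1 ≤ N by omega)]
        field_simp
      have main : ∀ n : ℕ, 1 ≤ n →
          (∫⁻ t in Ioi (0:ℝ),
              ENNReal.ofReal ((t ^ (1/p) * rearr N (ufun N n) t) ^ r / t))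
            ≤ ENNReal.ofReal (K * (n:ℝ)^(1-r)) := by
        intro n hn
        have hn0 : (0:ℝ) < n := by exact_mod_cast hn
        have hn1 : (1:ℝ) ≤ n := by exact_mod_cast hn
        set b : ℝ := 2/(n:ℝ) * 2^(n*(N-1)) with hbdef
        have hb0 : 0 < b := by positivity
        set a : ℝ := (((2:ℝ)^n)⁻¹)^N * V₀ with hadef
        have ha0 : 0 < a := by positivity
        have haV : a ≤ V₀ := by
          rw [hadef]
          calc (((2:ℝ)^n)⁻¹)^N * V₀ ≤ 1 * V₀ := by
                apply mul_le_mul_of_nonneg_right ?_ hV₀.le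
                apply pow_le_one₀ (by positivity)
                exact inv_le_one_of_one_le₀ (one_le_pow₀ (by norm_num))
          _ = V₀ := one_mul V₀
        have hsplit : (Ioi (0:ℝ)) = (Ioc 0 a ∪ Ioc a V₀) ∪ Ioi V₀ := by
          rw [Set.Ioc_union_Ioc_eq_Ioc ha0.le haV,
            Set.Ioc_union_Ioi_eq_Ioi (le_trans ha0.le haV)]
        have hd1 : Disjoint (Ioc (0:ℝ) a ∪ Ioc a V₀) (Ioi V₀) := by
          rw [Set.Ioc_union_Ioc_eq_Ioc ha0.le haV]
          exact Set.disjoint_left.2 fun x hx hx' => absurd hx.2 (not_le.2 hx')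
        have hd2 : Disjoint (Ioc (0:ℝ) a) (Ioc a V₀) :=
          Set.disjoint_left.2 fun x hx hx' => absurd hx.2 (not_le.2 hx'.1)
        rw [hsplit, lintegral_union measurableSet_Ioi hd1,
          lintegral_union measurableSet_Ioc hd2]
        -- piece 3 vanishes
        have h3 : (∫⁻ t in Ioi V₀,
            ENNReal.ofReal ((t ^ (1/p) * rearr N (ufun N n) t) ^ r / t)) = 0 := by
          rw [setLIntegral_congr_fun measurableSet_Ioi
            (fun t ht => ?_), lintegral_zero]
          rw [rearr_zero hN n (le_of_lt ht), mul_zero,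
            Real.zero_rpow (ne_of_gt hr0), zero_div, ENNReal.ofReal_zero]
        -- piece 1
        have hkey : b * a^e = 2/(n:ℝ) * V₀^e := by
          have hXe : ((((2:ℝ)^n)⁻¹)^N)^e = ((2:ℝ)^(n*(N-1)))⁻¹ := by
            rw [inv_pow, ← pow_mul, Real.inv_rpow (by positivity),
              ← Real.rpow_natCast 2 (n*N), ← Real.rpow_mul (by norm_num),
              hcastE n, Real.rpow_natCast]
          have h2n : ((2:ℝ)^(n*(N-1))) ≠ 0 := by positivity
          rw [hbdef, hadef, Real.mul_rpow (by positivity) hV₀.le, hXe]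
          field_simp
        have h1 : (∫⁻ t in Ioc (0:ℝ) a,
            ENNReal.ofReal ((t ^ (1/p) * rearr N (ufun N n) t) ^ r / t))
            ≤ ENNReal.ofReal ((2*V₀^e)^r/β * (n:ℝ)^(-r)) := by
          have hmono : ∀ t ∈ Ioc (0:ℝ) a,
              ENNReal.ofReal ((t ^ (1/p) * rearr N (ufun N n) t) ^ r / t)
                ≤ ENNReal.ofReal (b^r * t^(β-1)) := by
            intro t ht
            have ht0 : 0 < t := ht.1
            apply ENNReal.ofReal_le_ofReal
            have hre := rearr_global hN hn ht0
            have step1 : (t^(1/p) * rearr N (ufun N n) t)^r ≤ (t^(1/p)*b)^r := by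
              apply Real.rpow_le_rpow
                (mul_nonneg (Real.rpow_nonneg ht0.le _) (rearr_nonneg N _ t)) ?_ hr0.le
              exact mul_le_mul_of_nonneg_left hre (Real.rpow_nonneg ht0.le _)
            have step2 : (t^(1/p)*b)^r / t = b^r * t^(β-1) := by
              rw [hpe, Real.mul_rpow (Real.rpow_nonneg ht0.le e) hb0.le,
                ← Real.rpow_mul ht0.le, Real.rpow_sub ht0, Real.rpow_one,
                hbetadef, mul_comm e r]
              ring
            rw [← step2]
            gcongr
          have hint : IntegrableOn (fun t : ℝ => b^r * t^(β-1)) (Ioc 0 a) volume := by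
            rw [← intervalIntegrable_iff_integrableOn_Ioc_of_le ha0.le]
            exact (intervalIntegral.intervalIntegrable_rpow'
              (by linarith : (-1:ℝ) < β - 1)).const_mul _
          have hae : 0 ≤ᵐ[volume.restrict (Ioc (0:ℝ) a)]
              fun t : ℝ => b^r * t^(β-1) := by
            rw [EventuallyLE, ae_restrict_iff' measurableSet_Ioc]
            apply ae_of_all
            intro t ht
            have := ht.1
            positivity
          calc (∫⁻ t in Ioc (0:ℝ) a,
              ENNReal.ofReal ((t ^ (1/p) * rearr N (ufun N n) t) ^ r / t))
              ≤ ∫⁻ t in Ioc (0:ℝ) a, ENNReal.ofReal (b^r * t^(β-1)) :=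
                setLIntegral_mono (by fun_prop) hmono
          _ = ENNReal.ofReal (∫ t in Ioc (0:ℝ) a, b^r * t^(β-1)) :=
              (ofReal_integral_eq_lintegral_ofReal hint hae).symm
          _ = ENNReal.ofReal (b^r * (a^β/β)) := by
              rw [← intervalIntegral.integral_of_le ha0.le,
                intervalIntegral.integral_const_mul,
                integral_rpow (Or.inl (by linarith : (-1:ℝ) < β - 1))]
              rw [show β - 1 + 1 = β by ring, Real.zero_rpow (ne_of_gt hβ0), sub_zero]
          _ = ENNReal.ofReal ((2*V₀^e)^r/β * (n:ℝ)^(-r)) := by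
              congr 1
              calc b^r * (a^β/β) = (b * a^e)^r / β := by
                    rw [hbetadef, mul_comm r e, Real.rpow_mul ha0.le,
                      Real.mul_rpow hb0.le (Real.rpow_nonneg ha0.le e)]
                    ring
              _ = (2/(n:ℝ)*V₀^e)^r/β := by rw [hkey]
              _ = (2*V₀^e)^r/β * (n:ℝ)^(-r) := by
                    rw [show 2/(n:ℝ)*V₀^e = (2*V₀^e)/(n:ℝ) by ring,
                      Real.div_rpow (by positivity) (Nat.cast_nonneg n),
                      Real.rpow_neg (Nat.cast_nonneg n)]
                    ring
        -- piece 2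
        have h2 : (∫⁻ t in Ioc a V₀,
            ENNReal.ofReal ((t ^ (1/p) * rearr N (ufun N n) t) ^ r / t))
            ≤ ENNReal.ofReal ((2^N*V₀^e)^r * N * Real.log 2 * (n:ℝ)^(1-r)) := by
          set c : ℝ := (2^N*V₀^e/(n:ℝ))^r with hcdef
          have hc0 : 0 ≤ c := Real.rpow_nonneg (by positivity) r
          have hmono : ∀ t ∈ Ioc a V₀,
              ENNReal.ofReal ((t ^ (1/p) * rearr N (ufun N n) t) ^ r / t)
                ≤ ENNReal.ofReal (c * t⁻¹) := by
            intro t ht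
            have ht0 : 0 < t := lt_trans ha0 ht.1
            apply ENNReal.ofReal_le_ofReal
            have hre := rearr_mid hN hn ht0 ht.2
            have hone : t^e * t^(-e) = 1 := by
              rw [← Real.rpow_add ht0, add_neg_cancel, Real.rpow_zero]
            have h4 : t^(1/p) * rearr N (ufun N n) t ≤ 2^N*V₀^e/(n:ℝ) := by
              rw [hpe]
              calc t^e * rearr N (ufun N n) t
                  ≤ t^e * (2^N * V₀^e / (n:ℝ) * t^(-e)) :=
                    mul_le_mul_of_nonneg_left hre (Real.rpow_nonneg ht0.le e)
              _ = 2^N * V₀^e / (n:ℝ) * (t^e * t^(-e)) := by ring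
              _ = 2^N * V₀^e / (n:ℝ) := by rw [hone, mul_one]
            have h5 : (t^(1/p) * rearr N (ufun N n) t)^r ≤ c := by
              rw [hcdef]
              exact Real.rpow_le_rpow
                (mul_nonneg (Real.rpow_nonneg ht0.le _) (rearr_nonneg N _ t)) h4 hr0.le
            calc (t^(1/p) * rearr N (ufun N n) t)^r / t ≤ c / t := by
                  gcongr
            _ = c * t⁻¹ := div_eq_mul_inv _ _
          have hcont : ContinuousOn (fun t : ℝ => c * t⁻¹) (uIcc a V₀) := by
            apply ContinuousOn.mul continuousOn_const
            apply ContinuousOn.inv₀ continuousOn_id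
            intro t ht
            rw [uIcc_of_le haV] at ht
            exact ne_of_gt (lt_of_lt_of_le ha0 ht.1)
          have hint2 : IntegrableOn (fun t : ℝ => c * t⁻¹) (Ioc a V₀) volume := by
            rw [← intervalIntegrable_iff_integrableOn_Ioc_of_le haV]
            exact hcont.intervalIntegrable
          have hae2 : 0 ≤ᵐ[volume.restrict (Ioc a V₀)] fun t : ℝ => c * t⁻¹ := by
            rw [EventuallyLE, ae_restrict_iff' measurableSet_Ioc]
            apply ae_of_all
            intro t ht
            have ht0 : 0 < t := lt_trans ha0 ht.1
            positivity
          have hVa : V₀ / a = (2:ℝ)^(n*N) := by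
            rw [hadef, inv_pow, ← pow_mul]
            field_simp
          calc (∫⁻ t in Ioc a V₀,
              ENNReal.ofReal ((t ^ (1/p) * rearr N (ufun N n) t) ^ r / t))
              ≤ ∫⁻ t in Ioc a V₀, ENNReal.ofReal (c * t⁻¹) :=
                setLIntegral_mono (by fun_prop) hmono
          _ = ENNReal.ofReal (∫ t in Ioc a V₀, c * t⁻¹) :=
              (ofReal_integral_eq_lintegral_ofReal hint2 hae2).symm
          _ = ENNReal.ofReal (c * Real.log (V₀/a)) := by
              rw [← intervalIntegral.integral_of_le haV,
                intervalIntegral.integral_const_mul, integral_inv_of_pos ha0 hV₀]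
          _ = ENNReal.ofReal ((2^N*V₀^e)^r * N * Real.log 2 * (n:ℝ)^(1-r)) := by
              congr 1
              have hc' : c = (2^N*V₀^e)^r * (n:ℝ)^(-r) := by
                rw [hcdef, Real.div_rpow (by positivity) (Nat.cast_nonneg n),
                  Real.rpow_neg (Nat.cast_nonneg n)]
                ring
              have hn1r : (n:ℝ)^(1-r) = (n:ℝ)^(-r) * n := by
                rw [show (1:ℝ)-r = -r + 1 by ring, Real.rpow_add hn0, Real.rpow_one]
              rw [hVa, Real.log_pow, hc', hn1r]
              push_cast
              ring
        rw [h3, add_zero]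
        calc (∫⁻ t in Ioc (0:ℝ) a,
              ENNReal.ofReal ((t ^ (1/p) * rearr N (ufun N n) t) ^ r / t))
            + (∫⁻ t in Ioc a V₀,
              ENNReal.ofReal ((t ^ (1/p) * rearr N (ufun N n) t) ^ r / t))
            ≤ ENNReal.ofReal ((2*V₀^e)^r/β * (n:ℝ)^(-r))
              + ENNReal.ofReal ((2^N*V₀^e)^r * N * Real.log 2 * (n:ℝ)^(1-r)) :=
              add_le_add h1 h2
        _ ≤ ENNReal.ofReal ((2*V₀^e)^r/β * (n:ℝ)^(1-r))
              + ENNReal.ofReal ((2^N*V₀^e)^r * N * Real.log 2 * (n:ℝ)^(1-r)) := by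
            refine add_le_add ?_ le_rfl
            apply ENNReal.ofReal_le_ofReal
            apply mul_le_mul_of_nonneg_left ?_ (by positivity)
            exact Real.rpow_le_rpow_of_exponent_le hn1 (by linarith)
        _ = ENNReal.ofReal (K * (n:ℝ)^(1-r)) := by
            rw [← ENNReal.ofReal_add (by positivity)
              (mul_nonneg (mul_nonneg (mul_nonneg (by positivity) (by positivity)) hlog2)
                (by positivity))]
            congr 1
            rw [hKdef]
            ring
      -- conclude by squeezing
      apply tendsto_of_tendsto_of_tendsto_of_le_of_le' tendsto_const_nhds
        (h := fun n : ℕ => ENNReal.ofReal ((K * (n:ℝ)^(1-r))^(1/r)))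
        ?_ (Eventually.of_forall fun n => zero_le) ?_
      · have h1 : Tendsto (fun n : ℕ => (n:ℝ)^(1-r)) atTop (𝓝 0) := by
          have h2 := (tendsto_rpow_neg_atTop (show (0:ℝ) < r - 1 by linarith)).comp
            (tendsto_natCast_atTop_atTop (R := ℝ))
          simpa [Function.comp_def, neg_sub] using h2
        have h2 : Tendsto (fun n : ℕ => K * (n:ℝ)^(1-r)) atTop (𝓝 0) := by
          simpa using h1.const_mul K
        have h3 : ContinuousAt (fun x : ℝ => x^(1/r)) 0 :=
          Real.continuousAt_rpow_const 0 (1/r) (Or.inr (by positivity))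
        have h4 := (h3.tendsto.comp h2)
        rw [Real.zero_rpow (by positivity : (1:ℝ)/r ≠ 0)] at h4
        simpa using ENNReal.tendsto_ofReal h4
      · filter_upwards [eventually_ge_atTop 1] with n hn
        have hm := main n hn
        rw [lorentz, if_neg hqt, ← hrdef]
        calc (∫⁻ t in Ioi (0:ℝ),
            ENNReal.ofReal ((t ^ (1/p) * rearr N (ufun N n) t) ^ r / t)) ^ (1/r)
            ≤ (ENNReal.ofReal (K * (n:ℝ)^(1-r))) ^ (1/r) :=
              ENNReal.rpow_le_rpow hm (by positivity)
        _ = ENNReal.ofReal ((K * (n:ℝ)^(1-r))^(1/r)) :=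
            ENNReal.ofReal_rpow_of_nonneg (by positivity) (by positivity)
end
end

section
/- Let N≥2, 1*=N/(N−1), let φ be the indicator function of {x∈R^N : 1<|x|≤2}, let v_i(x) = 2^{i(N−1)}φ(2^i x) and u_n = (1/n)Σ_{i=1}^n v_i. Then {u_n} does not converge to 0 in L^{1*,1}(R^N): there is a constant c=c(N)>0 such that ‖u_n‖_{L^{1*,1}(R^N)} ≥ c for every n. (Indeed ∫ u_n(x)/|x| dx is bounded below by a positive constant while the function x↦1/|x| belongs to L^{N,∞}(R^N), which is the dual of L^{N/(N−1),1}(R^N).) -/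
open MeasureTheory Set Filter Topology ENNReal

noncomputable section

namespace CE18

lemma phi_nonneg (N : ℕ) (y : Euc N) : 0 ≤ phiAnn N y :=
  Set.indicator_nonneg (fun _ _ => zero_le_one) y

lemma phi_le_one (N : ℕ) (y : Euc N) : phiAnn N y ≤ 1 :=
  Set.indicator_le' (fun _ _ => le_refl 1) (fun _ _ => zero_le_one) y

lemma vfun_nonneg (N i : ℕ) (x : Euc N) : 0 ≤ vfun N i x :=
  mul_nonneg (by positivity) (phi_nonneg N _)

lemma vfun_eq (N i : ℕ) (x : Euc N) (h1 : 1 < (2:ℝ)^i * ‖x‖) (h2 : (2:ℝ)^i * ‖x‖ ≤ 2) :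
    vfun N i x = (2:ℝ) ^ (i*(N-1)) := by
  have hm : ((2:ℝ)^i • x) ∈ ann N := by
    have hnorm : ‖(2:ℝ)^i • x‖ = (2:ℝ)^i * ‖x‖ := by
      rw [norm_smul, Real.norm_eq_abs, abs_of_pos (by positivity)]
    exact ⟨by rw [hnorm]; exact h1, by rw [hnorm]; exact h2⟩
  unfold vfun phiAnn
  rw [Set.indicator_of_mem hm, mul_one]

lemma ufun_nonneg (N n : ℕ) (x : Euc N) : 0 ≤ ufun N n x :=
  mul_nonneg (by positivity) (Finset.sum_nonneg fun j _ => vfun_nonneg N j x)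

lemma ufun_ge (N n i : ℕ) (hi : i ∈ Finset.Icc 1 n) (x : Euc N)
    (h1 : 1 < (2:ℝ)^i * ‖x‖) (h2 : (2:ℝ)^i * ‖x‖ ≤ 2) :
    (2:ℝ) ^ (i*(N-1)) / n ≤ ufun N n x := by
  have hn : 1 ≤ n := le_trans (Finset.mem_Icc.mp hi).1 (Finset.mem_Icc.mp hi).2
  have hsum : (2:ℝ)^(i*(N-1)) ≤ ∑ j ∈ Finset.Icc 1 n, vfun N j x := by
    rw [← vfun_eq N i x h1 h2]
    exact Finset.single_le_sum (fun j _ => vfun_nonneg N j x) hi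
  have hn0 : (0:ℝ) < n := by exact_mod_cast hn
  calc (2:ℝ)^(i*(N-1)) / n = (1/n) * (2:ℝ)^(i*(N-1)) := by ring
    _ ≤ (1/n) * ∑ j ∈ Finset.Icc 1 n, vfun N j x :=
        mul_le_mul_of_nonneg_left hsum (by positivity)
    _ = ufun N n x := rfl

lemma ufun_le (N n : ℕ) (hn : 1 ≤ n) (x : Euc N) :
    ufun N n x ≤ ∑ j ∈ Finset.Icc 1 n, (2:ℝ)^(j*(N-1)) := by
  have hn0 : (0:ℝ) < n := by exact_mod_cast hn
  have h1 : (1:ℝ)/n ≤ 1 := by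
    rw [div_le_one hn0]; exact_mod_cast hn
  have hsum0 : 0 ≤ ∑ j ∈ Finset.Icc 1 n, vfun N j x :=
    Finset.sum_nonneg fun j _ => vfun_nonneg N j x
  calc ufun N n x ≤ 1 * ∑ j ∈ Finset.Icc 1 n, vfun N j x :=
        mul_le_mul_of_nonneg_right h1 hsum0
    _ = ∑ j ∈ Finset.Icc 1 n, vfun N j x := one_mul _
    _ ≤ ∑ j ∈ Finset.Icc 1 n, (2:ℝ)^(j*(N-1)) := by
        refine Finset.sum_le_sum fun j _ => ?_
        calc vfun N j x ≤ (2:ℝ)^(j*(N-1)) * 1 :=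
              mul_le_mul_of_nonneg_left (phi_le_one N _) (by positivity)
          _ = (2:ℝ)^(j*(N-1)) := mul_one _

lemma vol_annulus (N i : ℕ) (hN : 1 ≤ N) :
    volume {x : Euc N | 1 < (2:ℝ)^i * ‖x‖ ∧ (2:ℝ)^i * ‖x‖ ≤ 2}
      = ENNReal.ofReal (((2:ℝ)^N - 1) *
          ((volume (Metric.closedBall (0:Euc N) 1)).toReal / 2^(i*N))) := by
  set B := (volume (Metric.closedBall (0:Euc N) 1)).toReal with hBdef
  have h2i : (0:ℝ) < 2^i := by positivity
  have hset : {x : Euc N | 1 < (2:ℝ)^i * ‖x‖ ∧ (2:ℝ)^i * ‖x‖ ≤ 2}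
      = Metric.closedBall (0:Euc N) (2/2^i) \ Metric.closedBall (0:Euc N) (1/2^i) := by
    ext x
    simp only [mem_setOf_eq, mem_diff, Metric.mem_closedBall, dist_zero_right, not_le]
    constructor
    · rintro ⟨ha, hb⟩
      constructor
      · rw [le_div_iff₀ h2i]; nlinarith
      · rw [div_lt_iff₀ h2i]; nlinarith
    · rintro ⟨ha, hb⟩
      rw [le_div_iff₀ h2i] at ha
      rw [div_lt_iff₀ h2i] at hb
      constructor <;> nlinarith
  have hfin : volume (Metric.closedBall (0:Euc N) 1) ≠ ∞ := measure_closedBall_lt_top.ne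
  have hBeq : volume (Metric.closedBall (0:Euc N) 1) = ENNReal.ofReal B :=
    (ENNReal.ofReal_toReal hfin).symm
  have hball : ∀ r : ℝ, 0 ≤ r → volume (Metric.closedBall (0:Euc N) r)
      = ENNReal.ofReal (r^N * B) := by
    intro r hr
    rw [Measure.addHaar_closedBall' _ _ hr, finrank_euclideanSpace_fin, hBeq,
      ← ENNReal.ofReal_mul (by positivity)]
  rw [hset, measure_diff (Metric.closedBall_subset_closedBall (by gcongr <;> norm_num))
    measurableSet_closedBall.nullMeasurableSet measure_closedBall_lt_top.ne,
    hball _ (by positivity), hball _ (by positivity),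
    ← ENNReal.ofReal_sub _ (by positivity)]
  congr 1
  have hpow : ((2:ℝ)^i)^N = 2^(i*N) := by rw [← pow_mul]
  field_simp
  rw [div_pow, div_pow, one_pow, hpow]
  field_simp

lemma rearr_ge (N n i : ℕ) (hi : i ∈ Finset.Icc 1 n) (t : ℝ)
    (ht2 : ENNReal.ofReal t < volume {x : Euc N | 1 < (2:ℝ)^i * ‖x‖ ∧ (2:ℝ)^i * ‖x‖ ≤ 2}) :
    (2:ℝ)^(i*(N-1))/n ≤ rearr N (ufun N n) t := by
  have hn1 : 1 ≤ n := le_trans (Finset.mem_Icc.mp hi).1 (Finset.mem_Icc.mp hi).2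
  apply le_csInf
  · refine ⟨(∑ j ∈ Finset.Icc 1 n, (2:ℝ)^(j*(N-1))) + 1, ?_, ?_⟩
    · have : (0:ℝ) ≤ ∑ j ∈ Finset.Icc 1 n, (2:ℝ)^(j*(N-1)) :=
        Finset.sum_nonneg fun j _ => by positivity
      linarith
    · have hempty : {x : Euc N | (∑ j ∈ Finset.Icc 1 n, (2:ℝ)^(j*(N-1))) + 1 < |ufun N n x|}
          = (∅ : Set (Euc N)) := by
        ext x
        simp only [mem_setOf_eq, mem_empty_iff_false, iff_false, not_lt]
        rw [abs_of_nonneg (ufun_nonneg N n x)]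
        linarith [ufun_le N n hn1 x]
      rw [hempty]
      simp
  · rintro l ⟨hl0, hl⟩
    by_contra hcon
    push_neg at hcon
    have hsub : {x : Euc N | 1 < (2:ℝ)^i * ‖x‖ ∧ (2:ℝ)^i * ‖x‖ ≤ 2}
        ⊆ {x : Euc N | l < |ufun N n x|} := by
      rintro x ⟨h1, h2⟩
      have := ufun_ge N n i hi x h1 h2
      rw [mem_setOf_eq, abs_of_nonneg (ufun_nonneg N n x)]
      linarith
    exact absurd (le_trans (measure_mono hsub) hl) (not_le.mpr ht2)


lemma rpow_aux (N i : ℕ) (hN : 2 ≤ N) : ((((2:ℝ)^i)^N)⁻¹) ^ (-(1/(N:ℝ))) = (2:ℝ)^i := by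
  have hx : (0:ℝ) < (2:ℝ)^i := by positivity
  have hN0 : (N:ℝ) ≠ 0 := Nat.cast_ne_zero.mpr (by omega)
  rw [← Real.rpow_natCast ((2:ℝ)^i) N, ← Real.rpow_neg hx.le, ← Real.rpow_mul hx.le]
  have h1 : -(N:ℝ) * -(1/(N:ℝ)) = 1 := by field_simp
  rw [h1, Real.rpow_one]

lemma key_id (N n i : ℕ) (hN : 2 ≤ N) (hn : 1 ≤ n) {B : ℝ} (hB : 0 < B) :
    ENNReal.ofReal ((2:ℝ)^(i*(N-1))/n * (2*(B/2^(i*N))) ^ (-(1/(N:ℝ)))) *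
      ENNReal.ofReal (B/2^(i*N))
    = ENNReal.ofReal (B * (2*B)^(-(1/(N:ℝ))) / n) := by
  rw [← ENNReal.ofReal_mul (by positivity)]
  congr 1
  have h1 : 2*(B/2^(i*N)) = (2*B) * (((2:ℝ)^i)^N)⁻¹ := by
    rw [pow_mul]; ring
  rw [h1, Real.mul_rpow (by positivity) (by positivity), rpow_aux N i hN]
  have h3 : (2:ℝ)^(i*(N-1)) * 2^i = 2^(i*N) := by
    rw [← pow_add]
    congr 1
    have hN1 : N - 1 + 1 = N := by omega
    calc i*(N-1)+i = i*((N-1)+1) := by ring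
      _ = i*N := by rw [hN1]
  have hn0 : (0:ℝ) ≠ n := by
    have : (0:ℝ) < n := by exact_mod_cast hn
    exact this.ne
  have h2iN : (0:ℝ) < 2^(i*N) := by positivity
  field_simp
  rw [← h3]

end CE18

/-- `{u_n}` does not tend to `0` in `L^{1*,1}(ℝ^N)`: its
`L^{1*,1}`-quasinorm is bounded below by a positive constant `c = c(N)`. -/
theorem counterexample_no_convergence_in_L1star1
    (N : ℕ) (hN : 2 ≤ N) :
    ∃ c : ℝ, 0 < c ∧ ∀ n : ℕ, 1 ≤ n →
      ENNReal.ofReal c ≤ lorentz N ((N : ℝ) / ((N : ℝ) - 1)) 1 (ufun N n) := by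
  classical
  set B := (volume (Metric.closedBall (0:Euc N) 1)).toReal with hBdef
  have hB : 0 < B := ENNReal.toReal_pos
    (Metric.measure_closedBall_pos volume 0 one_pos).ne' measure_closedBall_lt_top.ne
  have hNR : (0:ℝ) < N := by exact_mod_cast (by omega : 0 < N)
  refine ⟨B * (2*B) ^ (-(1/(N:ℝ))), by positivity, fun n hn => ?_⟩
  have hexp : 1/((N:ℝ)/((N:ℝ)-1)) = ((N:ℝ)-1)/(N:ℝ) := one_div_div _ _
  have hq : lorentz N ((N:ℝ)/((N:ℝ)-1)) 1 (ufun N n)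
      = ∫⁻ t in Ioi (0:ℝ),
          ENNReal.ofReal (t ^ (((N:ℝ)-1)/(N:ℝ)) * rearr N (ufun N n) t / t) := by
    rw [lorentz, if_neg one_ne_top]
    simp only [ENNReal.toReal_one, Real.rpow_one, one_div_one, ENNReal.rpow_one, hexp]
  rw [hq]
  set w : ℕ → ℝ := fun i => B / 2^(i*N) with hw
  have hwpos : ∀ i, 0 < w i := fun i => div_pos hB (by positivity)
  set e : ℝ := -(1/(N:ℝ)) with he
  have he0 : e ≤ 0 := by
    rw [he]
    simp only [neg_nonpos]
    positivity
  set c : ℕ → ℝ≥0∞ := fun i => ENNReal.ofReal ((2:ℝ)^(i*(N-1))/n * (2*w i) ^ e) with hc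
  have hdis : ∀ i j : ℕ, i < j → 4 * w j ≤ w i := by
    intro i j hij
    have hstep : i*N + 2 ≤ j*N := by
      have h1 : (i+1)*N ≤ j*N := Nat.mul_le_mul_right N hij
      have h2 : (i+1)*N = i*N + N := by ring
      omega
    have hpow : (2:ℝ)^(i*N+2) ≤ 2^(j*N) := pow_le_pow_right₀ one_le_two hstep
    rw [hw]
    simp only
    rw [pow_add] at hpow
    have h2j : (0:ℝ) < 2^(j*N) := by positivity
    have h2i : (0:ℝ) < 2^(i*N) := by positivity
    rw [mul_div_assoc', div_le_div_iff₀ h2j h2i]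
    nlinarith [hB.le]
  have key : ∀ t : ℝ,
      (∑ i ∈ Finset.Icc 1 n, (Ioc (w i) (2*w i)).indicator (fun _ => c i) t)
      ≤ ENNReal.ofReal (t ^ (((N:ℝ)-1)/(N:ℝ)) * rearr N (ufun N n) t / t) := by
    intro t
    by_cases hex : ∃ i ∈ Finset.Icc 1 n, t ∈ Ioc (w i) (2*w i)
    · obtain ⟨i, hi, hti⟩ := hex
      have hsum : (∑ j ∈ Finset.Icc 1 n, (Ioc (w j) (2*w j)).indicator (fun _ => c j) t)
          = c i := by
        rw [Finset.sum_eq_single_of_mem i hi]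
        · exact Set.indicator_of_mem hti _
        · intro j hj hne
          apply Set.indicator_of_notMem
          rcases lt_or_gt_of_ne hne with h | h
          · have h4 := hdis j i h
            simp only [mem_Ioc, not_and_or, not_lt]
            left
            have := hwpos i
            linarith [hti.2]
          · have h4 := hdis i j h
            simp only [mem_Ioc, not_and_or, not_le]
            right
            have := hwpos j
            linarith [hti.1]
      rw [hsum, hc]
      simp only
      apply ENNReal.ofReal_le_ofReal
      have ht0 : 0 < t := lt_trans (hwpos i) hti.1
      have hr : (2:ℝ)^(i*(N-1))/n ≤ rearr N (ufun N n) t := by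
        apply CE18.rearr_ge N n i hi t
        rw [CE18.vol_annulus N i (by omega), ← hBdef]
        have h4 : (4:ℝ) ≤ 2^N := by
          calc (4:ℝ) = 2^2 := by norm_num
            _ ≤ 2^N := pow_le_pow_right₀ one_le_two hN
        refine lt_of_le_of_lt (ENNReal.ofReal_le_ofReal hti.2) ?_
        rw [ENNReal.ofReal_lt_ofReal_iff (by have := hwpos i; rw [hw] at this; simp only at this; nlinarith)]
        have hwi := hwpos i
        rw [hw] at hwi
        simp only at hwi ⊢
        nlinarith
      have hE : ((N:ℝ)-1)/(N:ℝ) - 1 = e := by rw [he]; field_simp; ring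
      have hstep : t ^ (((N:ℝ)-1)/(N:ℝ)) * rearr N (ufun N n) t / t
          = rearr N (ufun N n) t * t ^ e := by
        have hdiv : t ^ (((N:ℝ)-1)/(N:ℝ)) / t = t ^ e := by
          rw [← hE, Real.rpow_sub ht0, Real.rpow_one]
        calc t ^ (((N:ℝ)-1)/(N:ℝ)) * rearr N (ufun N n) t / t
            = rearr N (ufun N n) t * (t ^ (((N:ℝ)-1)/(N:ℝ)) / t) := by ring
          _ = rearr N (ufun N n) t * t ^ e := by rw [hdiv]
      rw [hstep]
      exact mul_le_mul hr (Real.rpow_le_rpow_of_nonpos ht0 hti.2 he0)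
        (by positivity) (le_trans (by positivity) hr)
    · push_neg at hex
      rw [Finset.sum_eq_zero fun j hj => Set.indicator_of_notMem (hex j hj) _]
      exact zero_le
  calc ENNReal.ofReal (B * (2*B) ^ e)
      = ∑ i ∈ Finset.Icc 1 n, ENNReal.ofReal (B * (2*B) ^ e / n) := by
        rw [Finset.sum_const, Nat.card_Icc]
        simp only [Nat.add_sub_cancel]
        rw [nsmul_eq_mul, ← ENNReal.ofReal_natCast, ← ENNReal.ofReal_mul (by positivity)]
        congr 1
        have hn0 : (n:ℝ) ≠ 0 := Nat.cast_ne_zero.mpr (by omega)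
        field_simp
    _ = ∑ i ∈ Finset.Icc 1 n, c i * volume (Ioc (w i) (2*w i)) := by
        refine Finset.sum_congr rfl fun i _ => ?_
        rw [Real.volume_Ioc]
        have h2w : 2*w i - w i = w i := by ring
        rw [h2w, hc]
        simp only
        rw [hw]
        simp only
        exact (CE18.key_id N n i hN hn hB).symm
    _ = ∑ i ∈ Finset.Icc 1 n,
          ∫⁻ t in Ioi (0:ℝ), (Ioc (w i) (2*w i)).indicator (fun _ => c i) t := by
        refine Finset.sum_congr rfl fun i _ => ?_
        rw [lintegral_indicator measurableSet_Ioc, setLIntegral_const,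
          Measure.restrict_apply measurableSet_Ioc]
        have hss : Ioc (w i) (2*w i) ∩ Ioi (0:ℝ) = Ioc (w i) (2*w i) :=
          Set.inter_eq_left.mpr fun x (hx : x ∈ Ioc (w i) (2*w i)) => lt_trans (hwpos i) hx.1
        rw [hss]
    _ = ∫⁻ t in Ioi (0:ℝ),
          ∑ i ∈ Finset.Icc 1 n, (Ioc (w i) (2*w i)).indicator (fun _ => c i) t :=
        (lintegral_finset_sum _ fun i _ => measurable_const.indicator measurableSet_Ioc).symm
    _ ≤ ∫⁻ t in Ioi (0:ℝ),
          ENNReal.ofReal (t ^ (((N:ℝ)-1)/(N:ℝ)) * rearr N (ufun N n) t / t) :=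
        lintegral_mono key
end
end

section
/- The embedding BV̇(R^N) ↪ L^{1*,1}(R^N), N≥2, is NOT cocompact with respect to the group D: there exists a sequence {u_n}⊂BV̇(R^N), bounded in BV̇(R^N), such that for every sequence {(j_n,y_n)}⊂Z×R^N one has g[j_n,y_n]u_n ⇀ 0 weakly in BV̇(R^N), and yet ‖u_n‖_{L^{1*,1}(R^N)} does not converge to 0. -/
open MeasureTheory Set Filter Topology ENNReal

noncomputable section

namespace NCC

def rr (N k : ℕ) : ℝ := 2 ^ (N * (k+1))
def aa (N k : ℕ) : ℝ := ((2:ℝ) ^ (N * (k+1) * (N-1)))⁻¹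
def cube (N : ℕ) (y : Euc N) (ρ : ℝ) : Set (Euc N) := {x | ∀ i, |x i - y i| ≤ ρ}
def uu (N n : ℕ) : Euc N → ℝ :=
  fun x => ((n:ℝ)+1)⁻¹ * ∑ k ∈ Finset.range (n+1),
    aa N k * (cube N 0 (rr N k)).indicator (fun _ => (1:ℝ)) x

variable {N : ℕ}

lemma rr_pos (k : ℕ) : 0 < rr N k := by unfold rr; positivity
lemma aa_pos (k : ℕ) : 0 < aa N k := by unfold aa; positivity

lemma rr_succ (k : ℕ) : rr N (k+1) = rr N k * 2 ^ N := by
  unfold rr; rw [← pow_add]; ring_nf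

lemma aa_mul_pow (hN : 1 ≤ N) (k : ℕ) : aa N k * (2 * rr N k)^(N-1) = 2^(N-1) := by
  unfold aa rr
  rw [mul_pow, ← pow_mul, mul_comm ((2:ℝ)^(N-1)) _, ← mul_assoc,
    inv_mul_cancel₀ (by positivity), one_mul]

lemma measurable_coord (i : Fin N) : Measurable fun x : Euc N => x i :=
  (measurable_pi_apply i).comp (MeasurableEquiv.toLp 2 (Fin N → ℝ)).symm.measurable

lemma cube_measurableSet (y : Euc N) (ρ : ℝ) : MeasurableSet (cube N y ρ) := by
  have h : cube N y ρ = ⋂ i, (fun x : Euc N => x i) ⁻¹' (Set.Icc (y i - ρ) (y i + ρ)) := by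
    ext x
    simp only [cube, Set.mem_setOf_eq, Set.mem_iInter, Set.mem_preimage, Set.mem_Icc]
    refine forall_congr' fun i => ?_
    rw [abs_le]
    constructor <;> intro h <;> constructor <;> linarith [h.1, h.2]
  rw [h]
  exact MeasurableSet.iInter fun i => (measurable_coord i) measurableSet_Icc

lemma volume_cube (y : Euc N) {ρ : ℝ} (hρ : 0 ≤ ρ) :
    volume (cube N y ρ) = ENNReal.ofReal ((2*ρ)^N) := by
  have h : cube N y ρ = (MeasurableEquiv.toLp 2 (Fin N → ℝ)).symm ⁻¹'
      (Set.univ.pi fun i => Set.Icc (y i - ρ) (y i + ρ)) := by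
    ext x
    simp only [cube, Set.mem_setOf_eq, Set.mem_preimage, Set.mem_univ_pi, Set.mem_Icc]
    have hxi : ∀ i, (MeasurableEquiv.toLp 2 (Fin N → ℝ)).symm x i = x i := fun _ => rfl
    simp only [hxi]
    refine forall_congr' fun i => ?_
    rw [abs_le]
    constructor <;> intro h <;> constructor <;> linarith [h.1, h.2]
  rw [h, (EuclideanSpace.volume_preserving_symm_measurableEquiv_toLp (Fin N)).measure_preimage
    ((MeasurableSet.univ_pi fun i => measurableSet_Icc).nullMeasurableSet), volume_pi_pi]
  have : ∀ i : Fin N, volume (Set.Icc (y i - ρ) (y i + ρ)) = ENNReal.ofReal (2*ρ) := by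
    intro i; rw [Real.volume_Icc]; ring_nf
  simp only [this, Finset.prod_const, Finset.card_univ, Fintype.card_fin]
  rw [ENNReal.ofReal_pow (by linarith)]

lemma ind_nonneg (s : Set (Euc N)) (x : Euc N) : 0 ≤ s.indicator (fun _ => (1:ℝ)) x :=
  Set.indicator_nonneg (fun _ _ => zero_le_one) x

lemma ind_le_one (s : Set (Euc N)) (x : Euc N) : s.indicator (fun _ => (1:ℝ)) x ≤ 1 := by
  by_cases h : x ∈ s <;> simp [h]

lemma uu_nonneg (n : ℕ) (x : Euc N) : 0 ≤ uu N n x := by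
  refine mul_nonneg (by positivity) (Finset.sum_nonneg fun k _ => ?_)
  exact mul_nonneg (aa_pos k).le (ind_nonneg _ x)

lemma uu_le_sum (n : ℕ) (x : Euc N) : uu N n x ≤ ∑ k ∈ Finset.range (n+1), aa N k := by
  have h1 : ∑ k ∈ Finset.range (n+1), aa N k * (cube N 0 (rr N k)).indicator (fun _ => (1:ℝ)) x
      ≤ ∑ k ∈ Finset.range (n+1), aa N k := by
    refine Finset.sum_le_sum fun k _ => ?_
    nlinarith [ind_le_one (cube N 0 (rr N k)) x, ind_nonneg (cube N 0 (rr N k)) x, aa_pos (N := N) k]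
  have h2 : ((n:ℝ)+1)⁻¹ ≤ 1 := by
    rw [inv_le_one_iff₀]; right; linarith [Nat.cast_nonneg (α := ℝ) n]
  calc uu N n x ≤ 1 * ∑ k ∈ Finset.range (n+1),
        aa N k * (cube N 0 (rr N k)).indicator (fun _ => (1:ℝ)) x := by
        unfold uu
        apply mul_le_mul_of_nonneg_right h2
        exact Finset.sum_nonneg fun k _ => mul_nonneg (aa_pos k).le (ind_nonneg _ x)
    _ ≤ ∑ k ∈ Finset.range (n+1), aa N k := by rw [one_mul]; exact h1

lemma uu_ge_on_cube {n k : ℕ} (hk : k ≤ n) {x : Euc N} (hx : x ∈ cube N 0 (rr N k)) :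
    ((n:ℝ)+1)⁻¹ * aa N k ≤ uu N n x := by
  unfold uu
  apply mul_le_mul_of_nonneg_left _ (by positivity)
  have := Finset.single_le_sum (f := fun k => aa N k * (cube N 0 (rr N k)).indicator (fun _ => (1:ℝ)) x)
    (fun k _ => mul_nonneg (aa_pos k).le (ind_nonneg _ x)) (Finset.mem_range.2 (Nat.lt_succ_of_le hk))
  simpa [Set.indicator_of_mem hx] using this

lemma uu_measurable (n : ℕ) : Measurable (uu N n) := by
  unfold uu
  exact (Finset.measurable_sum _ fun k _ =>
    (measurable_const.indicator (cube_measurableSet _ _)).const_mul (aa N k)).const_mul _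

lemma cube_mono (y : Euc N) {ρ₁ ρ₂ : ℝ} (h : ρ₁ ≤ ρ₂) : cube N y ρ₁ ⊆ cube N y ρ₂ :=
  fun x hx i => (hx i).trans h

lemma rr_mono {k l : ℕ} (h : k ≤ l) : rr N k ≤ rr N l := by
  unfold rr
  exact pow_le_pow_right₀ one_le_two (Nat.mul_le_mul_left N (by omega))

lemma uu_eq_zero {n : ℕ} {x : Euc N} (hx : x ∉ cube N 0 (rr N n)) : uu N n x = 0 := by
  unfold uu
  rw [Finset.sum_eq_zero, mul_zero]
  intro k hk
  rw [Set.indicator_of_notMem, mul_zero]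
  exact fun hmem => hx (cube_mono _ (rr_mono (Nat.lt_succ_iff.1 (Finset.mem_range.1 hk))) hmem)

end NCC

namespace NCC

variable {N : ℕ}

lemma coord_le_norm (w : Euc N) (i : Fin N) : |w i| ≤ ‖w‖ := by
  rw [EuclideanSpace.norm_eq]
  have h1 : |w i| = Real.sqrt (‖w i‖^2) := by
    rw [Real.norm_eq_abs, Real.sqrt_sq_eq_abs, abs_abs]
  rw [h1]
  apply Real.sqrt_le_sqrt
  exact Finset.single_le_sum (f := fun j => ‖w j‖^2) (fun j _ => sq_nonneg _) (Finset.mem_univ i)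

lemma divg_continuous {v : Euc N → Euc N} (hv : ContDiff ℝ (⊤ : ℕ∞) v) : Continuous (divg N v) := by
  unfold divg
  refine continuous_finset_sum _ fun i _ => ?_
  have h1 : Continuous fun x => fderiv ℝ v x := hv.continuous_fderiv (by simp)
  have h2 : Continuous fun x : Euc N => (fderiv ℝ v x) (EuclideanSpace.single i 1) :=
    (ContinuousLinearMap.apply ℝ (Euc N) (EuclideanSpace.single i (1:ℝ))).continuous.comp h1
  exact (EuclideanSpace.proj (𝕜 := ℝ) i).continuous.comp h2

lemma divg_compactSupport {v : Euc N → Euc N} (hcs : HasCompactSupport v) :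
    HasCompactSupport (divg N v) := by
  have h := hcs.fderiv ℝ
  have : divg N v = (fun L : Euc N →L[ℝ] Euc N => ∑ i, L (EuclideanSpace.single i 1) i)
      ∘ (fderiv ℝ v) := rfl
  rw [this]
  exact h.comp_left (by simp)

lemma divg_cube_bound (hN : 1 ≤ N) {v : Euc N → Euc N} (hv : ContDiff ℝ (⊤ : ℕ∞) v)
    (hb : ∀ x, ‖v x‖ ≤ 1) {ρ : ℝ} (hρ : 0 ≤ ρ) :
    |∫ x in cube N 0 ρ, divg N v x| ≤ 2 * N * (2*ρ)^(N-1) := by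
  obtain ⟨m, rfl⟩ : ∃ m, N = m + 1 := ⟨N-1, (Nat.succ_pred_eq_of_pos hN).symm⟩
  set L := PiLp.continuousLinearEquiv 2 ℝ (fun _ : Fin (m+1) => ℝ) with hL
  set a : Fin (m+1) → ℝ := fun _ => -ρ with ha
  set b : Fin (m+1) → ℝ := fun _ => ρ with hbb
  have hle : a ≤ b := fun i => by simp only [a, b]; linarith
  set f : Fin (m+1) → (Fin (m+1) → ℝ) → ℝ := fun i z => v (L.symm z) i with hf
  set f' : Fin (m+1) → (Fin (m+1) → ℝ) → (Fin (m+1) → ℝ) →L[ℝ] ℝ :=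
    fun i z => (EuclideanSpace.proj (𝕜 := ℝ) i).comp
      ((fderiv ℝ v (L.symm z)).comp (L.symm.toContinuousLinearMap)) with hf'
  have hdiv : ∀ z, (∑ i, f' i z (Pi.single i 1)) = divg (m+1) v (L.symm z) := by
    intro z; rfl
  have hcont : Continuous fun z => divg (m+1) v (L.symm z) :=
    (divg_continuous hv).comp L.symm.continuous
  have key := integral_divergence_of_hasFDerivAt_off_countable' a b hle f f' ∅
    Set.countable_empty
    (fun i => (((EuclideanSpace.proj (𝕜 := ℝ) i).continuous.comp
      (hv.continuous.comp L.symm.continuous)).continuousOn))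
    (fun x _ i => by
      have h0 : HasFDerivAt v (fderiv ℝ v (L.symm x)) (L.symm x) :=
        ((hv.differentiable (by simp)) (L.symm x)).hasFDerivAt
      have h1 := h0.comp x (L.symm.hasFDerivAt)
      exact (EuclideanSpace.proj (𝕜 := ℝ) i).hasFDerivAt.comp x h1)
    (by
      have : (fun x => ∑ i, f' i x (Pi.single i 1)) = fun z => divg (m+1) v (L.symm z) :=
        funext hdiv
      rw [this]
      exact hcont.continuousOn.integrableOn_compact isCompact_Icc)
  have htrans : ∫ x in cube (m+1) 0 ρ, divg (m+1) v x
      = ∫ z in Set.Icc a b, ∑ i, f' i z (Pi.single i 1) := by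
    rw [← MeasurePreserving.setIntegral_preimage_emb
      (EuclideanSpace.volume_preserving_symm_measurableEquiv_toLp (Fin (m+1)))
      (MeasurableEquiv.toLp 2 (Fin (m+1) → ℝ)).symm.measurableEmbedding
      (fun z => ∑ i, f' i z (Pi.single i 1)) (Set.Icc a b)]
    have hset : (MeasurableEquiv.toLp 2 (Fin (m+1) → ℝ)).symm ⁻¹' (Set.Icc a b)
        = cube (m+1) 0 ρ := by
      ext x
      simp only [Set.mem_preimage, Set.mem_Icc, cube, Set.mem_setOf_eq, Pi.le_def]
      have hxi : ∀ i, (MeasurableEquiv.toLp 2 (Fin (m+1) → ℝ)).symm x i = x i := fun _ => rfl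
      simp only [hxi, a, b]
      constructor
      · rintro ⟨h1, h2⟩ i
        have : (0 : Euc (m+1)) i = 0 := rfl
        rw [this, sub_zero, abs_le]
        exact ⟨h1 i, h2 i⟩
      · intro h
        constructor <;> intro i <;>
          · have := h i
            have h0 : (0 : Euc (m+1)) i = 0 := rfl
            rw [h0, sub_zero, abs_le] at this
            first | exact this.1 | exact this.2
    rw [hset]
    apply setIntegral_congr_fun (cube_measurableSet _ _)
    intro x _
    have : L.symm ((MeasurableEquiv.toLp 2 (Fin (m+1) → ℝ)).symm x) = x := rfl
    simp only [hdiv, this]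
  rw [htrans, key]
  have hface : ∀ (i : Fin (m+1)) (c : ℝ),
      |∫ (x : Fin m → ℝ) in Set.Icc (a ∘ i.succAbove) (b ∘ i.succAbove),
        f i (i.insertNth c x)| ≤ (2*ρ)^m := by
    intro i c
    have hvol : volume (Set.Icc (a ∘ i.succAbove) (b ∘ i.succAbove)) < ⊤ :=
      isCompact_Icc.measure_lt_top
    have hbd : ∀ x ∈ Set.Icc (a ∘ i.succAbove) (b ∘ i.succAbove),
        ‖f i (i.insertNth c x)‖ ≤ 1 := by
      intro x _
      have := coord_le_norm (v (L.symm (i.insertNth c x))) i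
      have h2 := hb (L.symm (i.insertNth c x))
      simp only [f, Real.norm_eq_abs]
      linarith
    have hmeas : AEStronglyMeasurable (fun x => f i (i.insertNth c x))
        (volume.restrict (Set.Icc (a ∘ i.succAbove) (b ∘ i.succAbove))) := by
      apply Continuous.aestronglyMeasurable
      exact ((EuclideanSpace.proj (𝕜 := ℝ) i).continuous.comp
        (hv.continuous.comp L.symm.continuous)).comp
        (continuous_const.finInsertNth i continuous_id)
    have := norm_setIntegral_le_of_norm_le_const hvol hbd
    rw [Real.norm_eq_abs] at this
    refine this.trans ?_
    rw [one_mul, measureReal_def, Real.volume_Icc_pi_toReal (fun j => by simp only [a, b, Function.comp]; linarith)]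
    have : ∀ j : Fin m, (b ∘ i.succAbove) j - (a ∘ i.succAbove) j = 2*ρ := by
      intro j; simp only [a, b, Function.comp]; ring
    simp only [this, Finset.prod_const, Finset.card_univ, Fintype.card_fin]
    exact le_rfl
  calc |∑ i : Fin (m+1), ((∫ (x : Fin m → ℝ) in Set.Icc (a ∘ i.succAbove) (b ∘ i.succAbove),
          f i (i.insertNth (b i) x)) -
        ∫ (x : Fin m → ℝ) in Set.Icc (a ∘ i.succAbove) (b ∘ i.succAbove),
          f i (i.insertNth (a i) x))|
      ≤ ∑ i : Fin (m+1), |(∫ (x : Fin m → ℝ) in Set.Icc (a ∘ i.succAbove) (b ∘ i.succAbove),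
          f i (i.insertNth (b i) x)) -
        ∫ (x : Fin m → ℝ) in Set.Icc (a ∘ i.succAbove) (b ∘ i.succAbove),
          f i (i.insertNth (a i) x)| := Finset.abs_sum_le_sum_abs _ _
    _ ≤ ∑ _i : Fin (m+1), ((2*ρ)^m + (2*ρ)^m) := by
        refine Finset.sum_le_sum fun i _ => ?_
        have h1 := hface i (b i)
        have h2 := hface i (a i)
        calc |_ - _| ≤ _ := abs_sub _ _
          _ ≤ (2*ρ)^m + (2*ρ)^m := add_le_add h1 h2
    _ = 2 * (m+1) * (2*ρ)^m := by
        rw [Finset.sum_const, Finset.card_univ, Fintype.card_fin]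
        push_cast; ring
    _ ≤ 2 * ↑(m+1) * (2*ρ)^((m+1)-1) := by
        simp only [Nat.add_sub_cancel]
        exact le_of_eq (by push_cast; ring)

end NCC

namespace NCC

variable {N : ℕ}

lemma ind_mul (s : Set (Euc N)) (g : Euc N → ℝ) (x : Euc N) :
    s.indicator (fun _ => (1:ℝ)) x * g x = s.indicator g x := by
  by_cases h : x ∈ s <;> simp [h]

lemma TV_uu_le (hN : 1 ≤ N) (n : ℕ) :
    TV N (uu N n) Set.univ ≤ ENNReal.ofReal (2 * N * 2^(N-1)) := by
  refine iSup_le fun v => iSup_le fun hv => iSup_le fun hcs => iSup_le fun hb =>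
    iSup_le fun _ => ?_
  apply ENNReal.ofReal_le_ofReal
  have hg : Integrable (divg N v) :=
    (divg_continuous hv).integrable_of_hasCompactSupport (divg_compactSupport hcs)
  have h1 : ∀ x, uu N n x * divg N v x = ∑ k ∈ Finset.range (n+1),
      (((n:ℝ)+1)⁻¹ * aa N k) * (cube N 0 (rr N k)).indicator (divg N v) x := by
    intro x
    unfold uu
    rw [mul_assoc, Finset.sum_mul, Finset.mul_sum]
    refine Finset.sum_congr rfl fun k _ => ?_
    rw [mul_assoc, ind_mul, ← mul_assoc]
  have h2 : ∫ x, uu N n x * divg N v x = ∑ k ∈ Finset.range (n+1),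
      (((n:ℝ)+1)⁻¹ * aa N k) * ∫ x in cube N 0 (rr N k), divg N v x := by
    simp_rw [h1]
    rw [integral_finset_sum _ (fun k _ => ((hg.indicator (cube_measurableSet _ _)).const_mul _))]
    refine Finset.sum_congr rfl fun k _ => ?_
    rw [MeasureTheory.integral_const_mul, integral_indicator (cube_measurableSet _ _)]
  rw [h2]
  have h3 : ∀ k, (((n:ℝ)+1)⁻¹ * aa N k) * ∫ x in cube N 0 (rr N k), divg N v x
      ≤ ((n:ℝ)+1)⁻¹ * (2 * N * 2^(N-1)) := by
    intro k
    have hb1 := (le_abs_self _).trans (divg_cube_bound hN hv hb (rr_pos (N:=N) k).le)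
    calc (((n:ℝ)+1)⁻¹ * aa N k) * ∫ x in cube N 0 (rr N k), divg N v x
        ≤ (((n:ℝ)+1)⁻¹ * aa N k) * (2 * N * (2 * rr N k)^(N-1)) := by
          exact mul_le_mul_of_nonneg_left hb1 (mul_nonneg (by positivity) (aa_pos k).le)
      _ = ((n:ℝ)+1)⁻¹ * (2 * N * (aa N k * (2 * rr N k)^(N-1))) := by ring
      _ = ((n:ℝ)+1)⁻¹ * (2 * N * 2^(N-1)) := by rw [aa_mul_pow hN]
  calc ∑ k ∈ Finset.range (n+1),
        (((n:ℝ)+1)⁻¹ * aa N k) * ∫ x in cube N 0 (rr N k), divg N v x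
      ≤ ∑ _k ∈ Finset.range (n+1), ((n:ℝ)+1)⁻¹ * (2 * N * 2^(N-1)) :=
        Finset.sum_le_sum fun k _ => h3 k
    _ = (n+1 : ℕ) * (((n:ℝ)+1)⁻¹ * (2 * N * 2^(N-1))) := by
        rw [Finset.sum_const, Finset.card_range, nsmul_eq_mul]
    _ = 2 * N * 2^(N-1) := by
        have hne : ((n:ℝ)+1) ≠ 0 := by positivity
        push_cast
        field_simp

lemma memBVdot_uu (hN : 1 ≤ N) (n : ℕ) : MemBVdot N (uu N n) := by
  refine ⟨uu_measurable n, ?_, ?_⟩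
  · intro M hM
    have hsub : {x : Euc N | M < |uu N n x|} ⊆ cube N 0 (rr N n) := by
      intro x hx
      by_contra hc
      rw [Set.mem_setOf_eq, uu_eq_zero hc, abs_zero] at hx; linarith
    calc volume {x : Euc N | M < |uu N n x|} ≤ volume (cube N 0 (rr N n)) := measure_mono hsub
      _ = ENNReal.ofReal ((2 * rr N n)^N) := volume_cube _ (rr_pos n).le
      _ < ⊤ := ENNReal.ofReal_lt_top
  · exact lt_of_le_of_lt (TV_uu_le hN n) ENNReal.ofReal_lt_top

end NCC

namespace NCC

variable {N : ℕ}

def Ek (N : ℕ) (j : ℤ) (y : Euc N) (k : ℕ) : Set (Euc N) :=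
  cube N y (((2:ℝ)^j)⁻¹ * rr N k)

def cf (N : ℕ) (j : ℤ) : ℝ := (2:ℝ)^(((N:ℤ)-1)*j)

lemma cf_pos {j : ℤ} : 0 < cf N j := by unfold cf; positivity

lemma mem_cube_smul (j : ℤ) (y x : Euc N) (ρ : ℝ) :
    ((2:ℝ)^j • (x - y) ∈ cube N 0 ρ) ↔ x ∈ cube N y (((2:ℝ)^j)⁻¹ * ρ) := by
  simp only [cube, Set.mem_setOf_eq]
  refine forall_congr' fun i => ?_
  have hz : ((2:ℝ)^j • (x - y)) i - (0:Euc N) i = (2:ℝ)^j * (x i - y i) := by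
    have h0 : (0:Euc N) i = 0 := rfl
    rw [h0, sub_zero]; simp
  have hp : (0:ℝ) < (2:ℝ)^j := by positivity
  rw [hz, abs_mul, abs_of_pos hp, inv_mul_eq_div, le_div_iff₀ hp, mul_comm]

lemma resc_uu_eq (n : ℕ) (j : ℤ) (y : Euc N) (x : Euc N) :
    resc N j y (uu N n) x = ∑ k ∈ Finset.range (n+1),
      (((n:ℝ)+1)⁻¹ * (cf N j * aa N k)) * (Ek N j y k).indicator (fun _ => (1:ℝ)) x := by
  have hr : resc N j y (uu N n) x = cf N j * uu N n ((2:ℝ)^j • (x - y)) := rfl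
  have hind : ∀ k, (cube N 0 (rr N k)).indicator (fun _ => (1:ℝ)) ((2:ℝ)^j • (x - y))
      = (Ek N j y k).indicator (fun _ => (1:ℝ)) x := by
    intro k
    by_cases h : x ∈ Ek N j y k
    · rw [Set.indicator_of_mem h, Set.indicator_of_mem ((mem_cube_smul j y x _).2 h)]
    · rw [Set.indicator_of_notMem h,
        Set.indicator_of_notMem (fun hc => h ((mem_cube_smul j y x _).1 hc))]
  rw [hr]
  unfold uu
  rw [← mul_assoc, Finset.mul_sum]
  refine Finset.sum_congr rfl fun k _ => ?_
  rw [hind k]; ring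

lemma resc_nonneg (n : ℕ) (j : ℤ) (y x : Euc N) : 0 ≤ resc N j y (uu N n) x := by
  have hr : resc N j y (uu N n) x = cf N j * uu N n ((2:ℝ)^j • (x - y)) := rfl
  rw [hr]
  exact mul_nonneg cf_pos.le (uu_nonneg _ _)

lemma Ek_vol (j : ℤ) (y : Euc N) (k : ℕ) :
    volume (Ek N j y k) = ENNReal.ofReal ((2*(((2:ℝ)^j)⁻¹ * rr N k))^N) :=
  volume_cube _ (mul_nonneg (by positivity) (rr_pos k).le)

lemma Ek_meas (j : ℤ) (y : Euc N) (k : ℕ) : MeasurableSet (Ek N j y k) :=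
  cube_measurableSet _ _

lemma resc_measurable (n : ℕ) (j : ℤ) (y : Euc N) :
    Measurable (resc N j y (uu N n)) := by
  rw [show resc N j y (uu N n) = _ from funext (resc_uu_eq n j y)]
  exact Finset.measurable_sum _ fun k _ =>
    (measurable_const.indicator (Ek_meas j y k)).const_mul _

lemma resc_integrable (n : ℕ) (j : ℤ) (y : Euc N) :
    Integrable (resc N j y (uu N n)) := by
  rw [show resc N j y (uu N n) = _ from funext (resc_uu_eq n j y)]
  refine integrable_finset_sum _ fun k _ => Integrable.const_mul ?_ _
  refine (integrable_indicator_iff (Ek_meas j y k)).2 ?_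
  refine integrableOn_const ?_ (by simp)
  rw [Ek_vol]
  exact ENNReal.ofReal_ne_top

lemma aa_le_geom (hN : 2 ≤ N) (k i : ℕ) : aa N (k+i) ≤ aa N k * (1/2)^i := by
  unfold aa
  rw [one_div, inv_pow, ← mul_inv, ← pow_add]
  have hle : N*(k+1)*(N-1) + i ≤ N*(k+i+1)*(N-1) := by
    have h1 : 1 ≤ N - 1 := by omega
    have h2 : i = 1*i*1 := by ring
    have h3 : 1*i*1 ≤ N*i*(N-1) := Nat.mul_le_mul (Nat.mul_le_mul (by omega) le_rfl) h1
    have h4 : N*(k+i+1)*(N-1) = N*(k+1)*(N-1) + N*i*(N-1) := by ring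
    omega
  have hpow : (2:ℝ)^(N*(k+1)*(N-1) + i) ≤ 2^(N*(k+i+1)*(N-1)) :=
    pow_le_pow_right₀ one_le_two hle
  exact inv_anti₀ (by positivity) hpow

lemma resc_rpow_le (hN : 2 ≤ N) (n : ℕ) (j : ℤ) (y x : Euc N) :
    (resc N j y (uu N n) x) ^ ((N:ℝ)/((N:ℝ)-1)) ≤ ∑ k ∈ Finset.range (n+1),
      (2*(((n:ℝ)+1)⁻¹ * (cf N j * aa N k)))^((N:ℝ)/((N:ℝ)-1)) *
        (Ek N j y k).indicator (fun _ => (1:ℝ)) x := by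
  have hN2 : (2:ℝ) ≤ (N:ℝ) := by exact_mod_cast hN
  set q := (N:ℝ)/((N:ℝ)-1) with hqdef
  have hq : 0 < q := by
    rw [hqdef]; apply div_pos <;> linarith
  have hRnn : ∀ k, (0:ℝ) ≤ (2*(((n:ℝ)+1)⁻¹ * (cf N j * aa N k)))^q *
      (Ek N j y k).indicator (fun _ => (1:ℝ)) x := fun k =>
    mul_nonneg (Real.rpow_nonneg (mul_nonneg (by norm_num)
      (mul_nonneg (by positivity) (mul_nonneg cf_pos.le (aa_pos _).le))) q) (ind_nonneg _ _)
  by_cases hex : ∃ k, k ≤ n ∧ x ∈ Ek N j y k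
  · obtain ⟨kw, hkw, hxkw⟩ := hex
    letI : DecidablePred fun k => x ∈ Ek N j y k := Classical.decPred _
    have hex2 : ∃ k, x ∈ Ek N j y k := ⟨kw, hxkw⟩
    set k₀ := Nat.find hex2 with hk₀
    have hk₀n : k₀ ≤ n := (Nat.find_min' hex2 hxkw).trans hkw
    have hxk₀ : x ∈ Ek N j y k₀ := Nat.find_spec hex2
    have hmin : ∀ l, l < k₀ → x ∉ Ek N j y l := fun l hl => Nat.find_min hex2 hl
    have hβ : (0:ℝ) ≤ ((n:ℝ)+1)⁻¹ := by positivity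
    have hcoef : ∀ k, (0:ℝ) ≤ ((n:ℝ)+1)⁻¹ * (cf N j * aa N k) := fun k =>
      mul_nonneg hβ (mul_nonneg cf_pos.le (aa_pos _).le)
    have hW : resc N j y (uu N n) x ≤ 2 * (((n:ℝ)+1)⁻¹ * (cf N j * aa N k₀)) := by
      rw [resc_uu_eq]
      have hsplit : ∑ k ∈ Finset.range (n+1),
          (((n:ℝ)+1)⁻¹ * (cf N j * aa N k)) * (Ek N j y k).indicator (fun _ => (1:ℝ)) x
          = ∑ k ∈ Finset.Ico k₀ (n+1),
          (((n:ℝ)+1)⁻¹ * (cf N j * aa N k)) * (Ek N j y k).indicator (fun _ => (1:ℝ)) x := by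
        rw [← Finset.sum_range_add_sum_Ico _ (by omega : k₀ ≤ n+1)]
        rw [Finset.sum_eq_zero, zero_add]
        intro k hk
        rw [Set.indicator_of_notMem (hmin k (Finset.mem_range.1 hk)), mul_zero]
      rw [hsplit]
      calc ∑ k ∈ Finset.Ico k₀ (n+1),
            (((n:ℝ)+1)⁻¹ * (cf N j * aa N k)) * (Ek N j y k).indicator (fun _ => (1:ℝ)) x
          ≤ ∑ k ∈ Finset.Ico k₀ (n+1), (((n:ℝ)+1)⁻¹ * (cf N j * aa N k)) := by
            refine Finset.sum_le_sum fun k _ => ?_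
            exact mul_le_of_le_one_right (hcoef k) (ind_le_one _ _)
        _ = ∑ i ∈ Finset.range (n+1-k₀), (((n:ℝ)+1)⁻¹ * cf N j) * aa N (k₀+i) := by
            rw [Finset.sum_Ico_eq_sum_range]
            exact Finset.sum_congr rfl fun i _ => by ring
        _ ≤ ∑ i ∈ Finset.range (n+1-k₀), (((n:ℝ)+1)⁻¹ * cf N j) * (aa N k₀ * (1/2)^i) := by
            refine Finset.sum_le_sum fun i _ => ?_
            exact mul_le_mul_of_nonneg_left (aa_le_geom hN k₀ i) (mul_nonneg hβ cf_pos.le)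
        _ = (((n:ℝ)+1)⁻¹ * cf N j * aa N k₀) * ∑ i ∈ Finset.range (n+1-k₀), (1/2:ℝ)^i := by
            rw [Finset.mul_sum]
            exact Finset.sum_congr rfl fun i _ => by ring
        _ ≤ (((n:ℝ)+1)⁻¹ * cf N j * aa N k₀) * 2 := by
            refine mul_le_mul_of_nonneg_left (sum_geometric_two_le _) ?_
            exact mul_nonneg (mul_nonneg hβ cf_pos.le) (aa_pos _).le
        _ = 2 * (((n:ℝ)+1)⁻¹ * (cf N j * aa N k₀)) := by ring
    have h1 : (resc N j y (uu N n) x)^q ≤ (2 * (((n:ℝ)+1)⁻¹ * (cf N j * aa N k₀)))^q :=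
      Real.rpow_le_rpow (resc_nonneg n j y x) hW hq.le
    refine h1.trans ?_
    have h2 := Finset.single_le_sum
      (f := fun k => (2*(((n:ℝ)+1)⁻¹ * (cf N j * aa N k)))^q *
        (Ek N j y k).indicator (fun _ => (1:ℝ)) x)
      (fun k _ => hRnn k) (Finset.mem_range.2 (by omega : k₀ < n+1))
    simpa [Set.indicator_of_mem hxk₀] using h2
  · push_neg at hex
    have hzero : resc N j y (uu N n) x = 0 := by
      rw [resc_uu_eq, Finset.sum_eq_zero]
      intro k hk
      rw [Set.indicator_of_notMem (hex k (Nat.lt_succ_iff.1 (Finset.mem_range.1 hk))), mul_zero]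
    rw [hzero, Real.zero_rpow hq.ne']
    exact Finset.sum_nonneg fun k _ => hRnn k

lemma exp_identity (hN : 2 ≤ N) (j : ℤ) (k : ℕ) :
    (cf N j * aa N k) ^ ((N:ℝ)/((N:ℝ)-1)) * (2*(((2:ℝ)^j)⁻¹ * rr N k))^N
      = 2^N := by
  have h2 : (0:ℝ) < 2 := two_pos
  have hN2 : (2:ℝ) ≤ (N:ℝ) := by exact_mod_cast hN
  have hN1 : ((N:ℝ)-1) ≠ 0 := by linarith
  have hca : cf N j * aa N k
      = (2:ℝ) ^ ((((N:ℤ)-1)*j : ℤ) + -(((N*(k+1)*(N-1) : ℕ)):ℝ) : ℝ) := by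
    unfold cf aa
    rw [← Real.rpow_intCast 2 (((N:ℤ)-1)*j), ← Real.rpow_natCast 2 (N*(k+1)*(N-1)),
      ← Real.rpow_neg h2.le, ← Real.rpow_add h2]
  have hj : ((2:ℝ)^(j:ℤ))⁻¹ = (2:ℝ)^(-(j:ℝ)) := by
    rw [← Real.rpow_intCast 2 j, ← Real.rpow_neg h2.le]
  have hbase : 2*(((2:ℝ)^j)⁻¹ * rr N k) = (2:ℝ) ^ ((1:ℝ) + -(j:ℝ) + ((N*(k+1) : ℕ):ℝ)) := by
    rw [hj]
    unfold rr
    rw [← Real.rpow_natCast 2 (N*(k+1)), Real.rpow_add h2, Real.rpow_add h2, Real.rpow_one]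
    ring
  rw [hca, hbase, ← Real.rpow_mul h2.le, ← Real.rpow_natCast ((2:ℝ)^((1:ℝ) + -(j:ℝ) + _)) N,
    ← Real.rpow_mul h2.le, ← Real.rpow_add h2, ← Real.rpow_natCast 2 N]
  congr 1
  have hcast : ((N*(k+1)*(N-1) : ℕ) : ℝ) = (N:ℝ)*((k:ℝ)+1)*((N:ℝ)-1) := by
    push_cast [Nat.cast_sub (by omega : 1 ≤ N)]
    ring
  have hcast2 : ((N*(k+1) : ℕ) : ℝ) = (N:ℝ)*((k:ℝ)+1) := by push_cast; ring
  rw [hcast, hcast2]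
  push_cast
  field_simp
  ring

lemma lint_rpow_le (hN : 2 ≤ N) (n : ℕ) (j : ℤ) (y : Euc N) :
    ∫⁻ x, (ENNReal.ofReal (resc N j y (uu N n) x)) ^ ((N:ℝ)/((N:ℝ)-1))
      ≤ ENNReal.ofReal (((n:ℝ)+1) * (2*((n:ℝ)+1)⁻¹)^((N:ℝ)/((N:ℝ)-1)) * 2^N) := by
  have hN2 : (2:ℝ) ≤ (N:ℝ) := by exact_mod_cast hN
  set q := (N:ℝ)/((N:ℝ)-1) with hqdef
  have hq : 0 < q := by rw [hqdef]; apply div_pos <;> linarith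
  have hβ : (0:ℝ) ≤ ((n:ℝ)+1)⁻¹ := by positivity
  have hdnn : ∀ k, (0:ℝ) ≤ (2*(((n:ℝ)+1)⁻¹ * (cf N j * aa N k)))^q :=
    fun k => Real.rpow_nonneg (mul_nonneg (by norm_num)
      (mul_nonneg hβ (mul_nonneg cf_pos.le (aa_pos _).le))) q
  calc ∫⁻ x, (ENNReal.ofReal (resc N j y (uu N n) x)) ^ q
      = ∫⁻ x, ENNReal.ofReal ((resc N j y (uu N n) x) ^ q) := by
        refine lintegral_congr fun x => ?_
        rw [ENNReal.ofReal_rpow_of_nonneg (resc_nonneg n j y x) hq.le]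
    _ ≤ ∫⁻ x, ENNReal.ofReal (∑ k ∈ Finset.range (n+1),
          (2*(((n:ℝ)+1)⁻¹ * (cf N j * aa N k)))^q *
            (Ek N j y k).indicator (fun _ => (1:ℝ)) x) :=
        lintegral_mono fun x => ENNReal.ofReal_le_ofReal (resc_rpow_le hN n j y x)
    _ = ∑ k ∈ Finset.range (n+1), ∫⁻ x, ENNReal.ofReal
          ((2*(((n:ℝ)+1)⁻¹ * (cf N j * aa N k)))^q *
            (Ek N j y k).indicator (fun _ => (1:ℝ)) x) := by
        have heq : ∀ x, ENNReal.ofReal (∑ k ∈ Finset.range (n+1),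
            (2*(((n:ℝ)+1)⁻¹ * (cf N j * aa N k)))^q *
              (Ek N j y k).indicator (fun _ => (1:ℝ)) x)
            = ∑ k ∈ Finset.range (n+1), ENNReal.ofReal
              ((2*(((n:ℝ)+1)⁻¹ * (cf N j * aa N k)))^q *
                (Ek N j y k).indicator (fun _ => (1:ℝ)) x) := fun x =>
          ENNReal.ofReal_sum_of_nonneg fun k _ => mul_nonneg (hdnn k) (ind_nonneg _ _)
        rw [lintegral_congr heq]
        exact lintegral_finset_sum _ fun k _ =>
          ((measurable_const.indicator (Ek_meas j y k)).const_mul _).ennreal_ofReal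
    _ = ∑ k ∈ Finset.range (n+1), ENNReal.ofReal
          ((2*(((n:ℝ)+1)⁻¹ * (cf N j * aa N k)))^q) * volume (Ek N j y k) := by
        refine Finset.sum_congr rfl fun k _ => ?_
        have heq : (fun x => ENNReal.ofReal
            ((2*(((n:ℝ)+1)⁻¹ * (cf N j * aa N k)))^q *
              (Ek N j y k).indicator (fun _ => (1:ℝ)) x))
            = (Ek N j y k).indicator (fun _ => ENNReal.ofReal
              ((2*(((n:ℝ)+1)⁻¹ * (cf N j * aa N k)))^q)) := by
          funext x
          by_cases h : x ∈ Ek N j y k <;> simp [h]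
        rw [heq, lintegral_indicator (Ek_meas j y k), setLIntegral_const]
    _ = ∑ _k ∈ Finset.range (n+1), ENNReal.ofReal ((2*((n:ℝ)+1)⁻¹)^q * 2^N) := by
        refine Finset.sum_congr rfl fun k _ => ?_
        rw [Ek_vol, ← ENNReal.ofReal_mul (hdnn k)]
        congr 1
        have harr : (2*(((n:ℝ)+1)⁻¹ * (cf N j * aa N k)))
            = (2*((n:ℝ)+1)⁻¹) * (cf N j * aa N k) := by ring
        rw [harr, Real.mul_rpow (by positivity) (mul_nonneg cf_pos.le (aa_pos _).le),
          mul_assoc, exp_identity hN j k]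
    _ = ENNReal.ofReal (((n:ℝ)+1) * (2*((n:ℝ)+1)⁻¹)^q * 2^N) := by
        rw [Finset.sum_const, Finset.card_range, nsmul_eq_mul,
          ← ENNReal.ofReal_natCast (n+1), ← ENNReal.ofReal_mul (by positivity)]
        congr 1
        push_cast
        ring

end NCC

namespace NCC

variable {N : ℕ}

lemma keyTendsto (hN : 2 ≤ N) (j : ℕ → ℤ) (y : ℕ → Euc N) {K : Set (Euc N)}
    (hK : IsCompact K) :
    Tendsto (fun n => ∫ x in K, resc N (j n) (y n) (uu N n) x) atTop (𝓝 0) := by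
  have hN2 : (2:ℝ) ≤ (N:ℝ) := by exact_mod_cast hN
  set q := (N:ℝ)/((N:ℝ)-1) with hqdef
  have hq1 : 1 < q := by rw [hqdef, lt_div_iff₀ (by linarith)]; linarith
  have hq : 0 < q := by linarith
  have hconj : Real.HolderConjugate q (N:ℝ) := Real.holderConjugate_iff.mpr ⟨hq1, by rw [hqdef]; field_simp; ring⟩
  have hKm : MeasurableSet K := hK.isClosed.measurableSet
  have hVne : (volume K)^(1/(N:ℝ)) ≠ ⊤ :=
    ENNReal.rpow_ne_top_of_nonneg (by positivity) hK.measure_lt_top.ne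
  set A : ℕ → ℝ := fun n => ((n:ℝ)+1) * (2*((n:ℝ)+1)⁻¹)^q * 2^N with hA
  have hAnn : ∀ n, 0 ≤ A n := fun n => by
    refine mul_nonneg (mul_nonneg (by positivity) (Real.rpow_nonneg (by positivity) q)) (by positivity)
  set B : ℕ → ℝ≥0∞ := fun n => ENNReal.ofReal ((A n)^(1/q)) * (volume K)^(1/(N:ℝ)) with hB
  -- Hölder bound
  have hbound : ∀ n, (∫⁻ x in K, ENNReal.ofReal (resc N (j n) (y n) (uu N n) x)) ≤ B n := by
    intro n
    set f : Euc N → ℝ≥0∞ := fun x => ENNReal.ofReal (resc N (j n) (y n) (uu N n) x) with hfdef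
    set g : Euc N → ℝ≥0∞ := K.indicator (fun _ => (1:ℝ≥0∞)) with hgdef
    have hf : AEMeasurable f volume := ((resc_measurable n (j n) (y n)).ennreal_ofReal).aemeasurable
    have hg : AEMeasurable g volume := (measurable_const.indicator hKm).aemeasurable
    have h2 := ENNReal.lintegral_mul_le_Lp_mul_Lq volume hconj hf hg
    have hLHS : ∫⁻ a, (f * g) a = ∫⁻ x in K, f x := by
      have : ∀ a, (f * g) a = K.indicator f a := by
        intro a
        by_cases h : a ∈ K <;> simp [h, hfdef, hgdef]
      rw [lintegral_congr this, lintegral_indicator hKm]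
    have hgN : ∫⁻ a, (g a)^(N:ℝ) = volume K := by
      have : ∀ a, (g a)^(N:ℝ) = K.indicator (fun _ => (1:ℝ≥0∞)) a := by
        intro a
        by_cases h : a ∈ K
        · simp [hgdef, h]
        · simp [hgdef, h, ENNReal.zero_rpow_of_pos (by positivity : (0:ℝ) < (N:ℝ))]
      rw [lintegral_congr this]
      exact lintegral_indicator_one hKm
    calc ∫⁻ x in K, f x = ∫⁻ a, (f * g) a := hLHS.symm
      _ ≤ (∫⁻ a, (f a)^q)^(1/q) * (∫⁻ a, (g a)^(N:ℝ))^(1/(N:ℝ)) := h2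
      _ = (∫⁻ a, (f a)^q)^(1/q) * (volume K)^(1/(N:ℝ)) := by rw [hgN]
      _ ≤ (ENNReal.ofReal (A n))^(1/q) * (volume K)^(1/(N:ℝ)) := by
          refine mul_le_mul_left (ENNReal.rpow_le_rpow ?_ (by positivity)) _
          exact lint_rpow_le hN n (j n) (y n)
      _ = B n := by rw [hB, ENNReal.ofReal_rpow_of_nonneg (hAnn n) (by positivity)]
  -- limit of the bound
  have hAlim : Tendsto A atTop (𝓝 0) := by
    have heq : ∀ n : ℕ, A n = (2^q * 2^N) * ((n:ℝ)+1)^(-(q-1)) := by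
      intro n
      have hp : (0:ℝ) < (n:ℝ)+1 := by positivity
      have h1 : ((n:ℝ)+1) * (((n:ℝ)+1)^q)⁻¹ = ((n:ℝ)+1)^(-(q-1)) := by
        rw [← Real.rpow_neg hp.le]
        nth_rewrite 1 [← Real.rpow_one ((n:ℝ)+1)]
        rw [← Real.rpow_add hp]
        congr 1
        ring
      calc A n = ((n:ℝ)+1) * (2^q * (((n:ℝ)+1)^q)⁻¹) * 2^N := by
            simp only [hA]
            rw [Real.mul_rpow (by norm_num) (by positivity), Real.inv_rpow hp.le]
        _ = (2^q * 2^N) * (((n:ℝ)+1) * (((n:ℝ)+1)^q)⁻¹) := by ring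
        _ = (2^q * 2^N) * ((n:ℝ)+1)^(-(q-1)) := by rw [h1]
    have h2 : Tendsto (fun n : ℕ => ((n:ℝ)+1)^(-(q-1))) atTop (𝓝 0) :=
      (tendsto_rpow_neg_atTop (by linarith : 0 < q-1)).comp
        (tendsto_atTop_add_const_right atTop 1 tendsto_natCast_atTop_atTop)
    have h3 := h2.const_mul (2^q*2^N : ℝ)
    rw [mul_zero] at h3
    exact Tendsto.congr (fun n => (heq n).symm) h3
  have hh2 : Tendsto (fun n => (A n)^(1/q)) atTop (𝓝 0) := by
    have hc : ContinuousAt (fun x : ℝ => x ^ (1/q)) 0 :=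
      Real.continuousAt_rpow_const 0 (1/q) (Or.inr (by positivity))
    have := hc.tendsto.comp hAlim
    rwa [Real.zero_rpow (by positivity : (1:ℝ)/q ≠ 0)] at this
  have hBlim : Tendsto B atTop (𝓝 0) := by
    have h1 := ENNReal.Tendsto.mul_const (ENNReal.tendsto_ofReal hh2)
      (Or.inr hVne)
    rw [ENNReal.ofReal_zero, zero_mul] at h1
    exact h1
  have hsq : Tendsto (fun n => ∫⁻ x in K, ENNReal.ofReal (resc N (j n) (y n) (uu N n) x))
      atTop (𝓝 0) :=
    tendsto_of_tendsto_of_tendsto_of_le_of_le tendsto_const_nhds hBlim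
      (fun n => zero_le) (fun n => hbound n)
  have heqI : ∀ n, ∫ x in K, resc N (j n) (y n) (uu N n) x
      = (∫⁻ x in K, ENNReal.ofReal (resc N (j n) (y n) (uu N n) x)).toReal := fun n =>
    integral_eq_lintegral_of_nonneg_ae (Filter.Eventually.of_forall fun x => resc_nonneg n (j n) (y n) x)
      ((resc_measurable n (j n) (y n)).aestronglyMeasurable)
  rw [show (fun n => ∫ x in K, resc N (j n) (y n) (uu N n) x) = _ from funext heqI]
  have := (ENNReal.tendsto_toReal (a := 0) (by simp)).comp hsq
  simpa [Function.comp_def] using this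

lemma weakconv (hN : 2 ≤ N) (j : ℕ → ℤ) (y : ℕ → Euc N) :
    WeakBVconv N (fun n => resc N (j n) (y n) (uu N n)) 0 := by
  constructor
  · intro K hK
    refine Tendsto.congr (fun n => ?_) (keyTendsto hN j y hK)
    refine integral_congr_ae (Filter.Eventually.of_forall fun x => ?_)
    simp [abs_of_nonneg (resc_nonneg n (j n) (y n) x)]
  · intro i f hf hsupp
    have h0 : (∫ x, (0 : Euc N → ℝ) x * fderiv ℝ f x (EuclideanSpace.single i 1)) = 0 := by
      simp
    rw [h0]
    have hK : IsCompact (tsupport f) := hsupp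
    obtain ⟨C, hC⟩ := (hf.continuous_fderiv (by simp)).bounded_above_of_compact_support (hsupp.fderiv ℝ)
    have hC0 : 0 ≤ C := le_trans (norm_nonneg _) (hC 0)
    have hD : ∀ x, |fderiv ℝ f x (EuclideanSpace.single i 1)| ≤ C := by
      intro x
      calc |fderiv ℝ f x (EuclideanSpace.single i 1)|
          ≤ ‖fderiv ℝ f x‖ * ‖EuclideanSpace.single i (1:ℝ)‖ :=
            (fderiv ℝ f x).le_opNorm _
        _ ≤ C * 1 := by
            refine mul_le_mul (hC x) ?_ (norm_nonneg _) hC0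
            rw [EuclideanSpace.norm_single]
            norm_num
        _ = C := mul_one C
    have hDz : ∀ x, x ∉ tsupport f → fderiv ℝ f x (EuclideanSpace.single i 1) = 0 := by
      intro x hx
      have : fderiv ℝ f x = 0 := by
        by_contra hne
        exact hx (support_fderiv_subset ℝ (by simpa [Function.mem_support] using hne))
      rw [this]; rfl
    have hlim : Tendsto (fun n => C * ∫ x in tsupport f, resc N (j n) (y n) (uu N n) x)
        atTop (𝓝 0) := by
      have := (keyTendsto hN j y hK).const_mul C
      rwa [mul_zero] at this
    refine squeeze_zero_norm (fun n => ?_) hlim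
    have hWint : Integrable (resc N (j n) (y n) (uu N n)) := resc_integrable n (j n) (y n)
    have htsm : MeasurableSet (tsupport f) := (isClosed_tsupport f).measurableSet
    have hint2 : Integrable (fun x => C * (tsupport f).indicator (resc N (j n) (y n) (uu N n)) x) :=
      (hWint.indicator htsm).const_mul C
    calc ‖∫ x, resc N (j n) (y n) (uu N n) x * fderiv ℝ f x (EuclideanSpace.single i 1)‖
        ≤ ∫ x, ‖resc N (j n) (y n) (uu N n) x * fderiv ℝ f x (EuclideanSpace.single i 1)‖ :=
          norm_integral_le_integral_norm _
      _ ≤ ∫ x, C * (tsupport f).indicator (resc N (j n) (y n) (uu N n)) x := by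
          refine integral_mono_of_nonneg (Filter.Eventually.of_forall fun x => norm_nonneg _)
            hint2 (Filter.Eventually.of_forall fun x => ?_)
          beta_reduce
          by_cases hx : x ∈ tsupport f
          · rw [Set.indicator_of_mem hx]
            calc ‖resc N (j n) (y n) (uu N n) x * fderiv ℝ f x (EuclideanSpace.single i 1)‖
                = resc N (j n) (y n) (uu N n) x * |fderiv ℝ f x (EuclideanSpace.single i 1)| := by
                  rw [Real.norm_eq_abs, abs_mul, abs_of_nonneg (resc_nonneg n (j n) (y n) x)]
              _ ≤ resc N (j n) (y n) (uu N n) x * C :=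
                  mul_le_mul_of_nonneg_left (hD x) (resc_nonneg n (j n) (y n) x)
              _ = C * resc N (j n) (y n) (uu N n) x := mul_comm _ _
          · rw [Set.indicator_of_notMem hx, hDz x hx, mul_zero, norm_zero, mul_zero]
      _ = C * ∫ x in tsupport f, resc N (j n) (y n) (uu N n) x := by
          rw [MeasureTheory.integral_const_mul, integral_indicator htsm]

end NCC

namespace NCC

variable {N : ℕ}

lemma rearr_ge (hN : 1 ≤ N) (n k : ℕ) (hk : k ≤ n) {t : ℝ} (ht : t < (2 * rr N k)^N) :
    ((n:ℝ)+1)⁻¹ * aa N k ≤ rearr N (uu N n) t := by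
  unfold rearr
  have hl₀ : ((∑ l ∈ Finset.range (n+1), aa N l) + 1) ∈ {l : ℝ | 0 < l ∧
      volume {x : Euc N | l < |uu N n x|} ≤ ENNReal.ofReal t} := by
    constructor
    · have : 0 ≤ ∑ l ∈ Finset.range (n+1), aa N l :=
        Finset.sum_nonneg fun l _ => (aa_pos l).le
      linarith
    · have hempty : {x : Euc N | (∑ l ∈ Finset.range (n+1), aa N l) + 1 < |uu N n x|} = ∅ := by
        ext x
        simp only [Set.mem_setOf_eq, Set.mem_empty_iff_false, iff_false, not_lt]
        rw [abs_of_nonneg (uu_nonneg n x)]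
        linarith [uu_le_sum (N := N) n x]
      rw [hempty, measure_empty]
      exact zero_le
  refine le_csInf ⟨_, hl₀⟩ ?_
  rintro l ⟨hl0, hlvol⟩
  by_contra hcon
  push_neg at hcon
  have hsub : cube N 0 (rr N k) ⊆ {x : Euc N | l < |uu N n x|} := by
    intro x hx
    have := uu_ge_on_cube hk hx
    rw [Set.mem_setOf_eq, abs_of_nonneg (uu_nonneg n x)]
    linarith
  have hpos : (0:ℝ) < (2 * rr N k)^N := pow_pos (by linarith [rr_pos (N := N) k]) N
  have h1 : ENNReal.ofReal ((2*rr N k)^N) ≤ ENNReal.ofReal t := by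
    calc ENNReal.ofReal ((2*rr N k)^N) = volume (cube N 0 (rr N k)) :=
          (volume_cube _ (rr_pos k).le).symm
      _ ≤ volume {x : Euc N | l < |uu N n x|} := measure_mono hsub
      _ ≤ ENNReal.ofReal t := hlvol
  have h2 : ENNReal.ofReal t < ENNReal.ofReal ((2*rr N k)^N) :=
    (ENNReal.ofReal_lt_ofReal_iff hpos).2 ht
  exact absurd h1 (not_le.2 h2)

open intervalIntegral in
lemma lorentz_ge_one (hN : 2 ≤ N) (n : ℕ) :
    1 ≤ lorentz N ((N:ℝ)/((N:ℝ)-1)) 1 (uu N n) := by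
  have hN2 : (2:ℝ) ≤ (N:ℝ) := by exact_mod_cast hN
  have hN1 : (0:ℝ) < (N:ℝ)-1 := by linarith
  have hN0 : (0:ℝ) < (N:ℝ) := by linarith
  rw [lorentz, if_neg (by simp : (1:ℝ≥0∞) ≠ ⊤)]
  simp only [ENNReal.toReal_one, Real.rpow_one, one_div_one, ENNReal.rpow_one]
  set p := (N:ℝ)/((N:ℝ)-1) with hpdef
  have hp : 1/p = ((N:ℝ)-1)/(N:ℝ) := by rw [hpdef, one_div_div]
  set r : ℝ := ((N:ℝ)-1)/(N:ℝ) - 1 with hrdef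
  have hr1 : r + 1 = ((N:ℝ)-1)/(N:ℝ) := by ring
  have hrgt : (-1:ℝ) < r := by
    rw [hrdef]
    have : (0:ℝ) < ((N:ℝ)-1)/(N:ℝ) := div_pos hN1 hN0
    linarith
  have hr1pos : (0:ℝ) < r + 1 := by rw [hr1]; exact div_pos hN1 hN0
  have hr1le : r + 1 ≤ 1 := by rw [hr1]; rw [div_le_one hN0]; linarith
  set R : ℕ → ℝ := fun k => 2 * rr N k with hR
  have hRpos : ∀ k, 0 < R k := fun k => by
    have := rr_pos (N := N) k; simp only [hR]; linarith
  set I : ℕ → Set ℝ := fun k => Set.Ioo ((R k / 2^N)^N) ((R k)^N) with hI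
  have hIpos : ∀ k, 0 < (R k / 2^N)^N := fun k => pow_pos (div_pos (hRpos k) (by positivity)) N
  have hNne : N ≠ 0 := by omega
  have hIlt : ∀ k, (R k / 2^N)^N < (R k)^N := fun k => by
    refine pow_lt_pow_left₀ ?_ (div_pos (hRpos k) (by positivity)).le hNne
    exact div_lt_self (hRpos k) (one_lt_pow₀ (by norm_num : (1:ℝ) < 2) hNne)
  have hsub : (⋃ k ∈ Finset.range (n+1), I k) ⊆ Set.Ioi (0:ℝ) := by
    intro t htm
    simp only [Set.mem_iUnion] at htm
    obtain ⟨k, _, htk⟩ := htm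
    exact Set.mem_Ioi.2 (lt_trans (hIpos k) htk.1)
  have hdisj : (↑(Finset.range (n+1)) : Set ℕ).PairwiseDisjoint I := by
    have key : ∀ a b : ℕ, a < b → Disjoint (I a) (I b) := by
      intro a b hab
      refine Set.disjoint_left.2 fun t hta htb => ?_
      have h1 : t < (R a)^N := hta.2
      have h2 : (R b / 2^N)^N < t := htb.1
      have h3 : (R a)^N ≤ (R b / 2^N)^N := by
        refine pow_le_pow_left₀ (hRpos a).le ?_ N
        rw [le_div_iff₀ (by positivity : (0:ℝ) < 2^N)]
        have hs : rr N a * 2^N = rr N (a+1) := (rr_succ a).symm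
        calc R a * 2^N = 2 * (rr N a * 2^N) := by simp only [hR]; ring
          _ = 2 * rr N (a+1) := by rw [hs]
          _ ≤ 2 * rr N b := by have := rr_mono (N := N) (show a+1 ≤ b by omega); linarith
          _ = R b := rfl
      linarith
    intro k hk l hl hkl
    rcases lt_or_gt_of_ne hkl with h | h
    · exact key k l h
    · exact (key l k h).symm
  calc (1:ℝ≥0∞) = ∑ k ∈ Finset.range (n+1), ENNReal.ofReal (((n:ℝ)+1)⁻¹) := by
        rw [Finset.sum_const, Finset.card_range, nsmul_eq_mul,
          ← ENNReal.ofReal_natCast (n+1), ← ENNReal.ofReal_mul (by positivity)]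
        rw [show ((n+1:ℕ):ℝ) * ((n:ℝ)+1)⁻¹ = 1 by push_cast; field_simp]
        exact ENNReal.ofReal_one.symm
    _ ≤ ∑ k ∈ Finset.range (n+1),
          ∫⁻ t in I k, ENNReal.ofReal (t^(1/p) * rearr N (uu N n) t / t) := by
        refine Finset.sum_le_sum fun k hk => ?_
        have hk' : k ≤ n := Nat.lt_succ_iff.1 (Finset.mem_range.1 hk)
        set c := ((n:ℝ)+1)⁻¹ * aa N k with hc
        have hcpos : 0 < c := mul_pos (by positivity) (aa_pos k)
        -- integrability of the comparison function on I k
        have hcont : ContinuousOn (fun t : ℝ => c * t^r)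
            (Set.Icc ((R k / 2^N)^N) ((R k)^N)) := by
          refine continuousOn_const.mul fun t ht => ?_
          exact (Real.continuousAt_rpow_const t r
            (Or.inl (ne_of_gt (lt_of_lt_of_le (hIpos k) ht.1)))).continuousWithinAt
        have hint : IntegrableOn (fun t : ℝ => c * t^r) (I k) :=
          (hcont.integrableOn_compact isCompact_Icc).mono_set Set.Ioo_subset_Icc_self
        have hnn : 0 ≤ᵐ[volume.restrict (I k)] (fun t : ℝ => c * t^r) := by
          refine (ae_restrict_iff' measurableSet_Ioo).2 (Filter.Eventually.of_forall fun t ht => ?_)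
          exact mul_nonneg hcpos.le (Real.rpow_nonneg (le_of_lt (lt_trans (hIpos k) ht.1)) r)
        -- value of the comparison integral
        have hval : (((n:ℝ)+1)⁻¹ : ℝ) ≤ ∫ t in I k, c * t^r := by
          rw [hI]
          rw [← integral_Ioc_eq_integral_Ioo, ← intervalIntegral.integral_of_le (hIlt k).le]
          rw [intervalIntegral.integral_const_mul, integral_rpow (Or.inl hrgt)]
          have hBpow : (((R k)^N : ℝ))^(r+1) = (R k)^(N-1 : ℕ) := by
            rw [hr1, ← Real.rpow_natCast (R k) N, ← Real.rpow_mul (hRpos k).le,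
              show (N:ℝ) * (((N:ℝ)-1)/(N:ℝ)) = (N:ℝ)-1 by field_simp,
              show ((N:ℝ)-1) = ((N-1 : ℕ):ℝ) by push_cast [Nat.cast_sub (by omega : 1 ≤ N)]; ring,
              Real.rpow_natCast]
          have hApow : (((R k / 2^N)^N : ℝ))^(r+1)
              = (R k)^(N-1 : ℕ) * ((2:ℝ)^(N*(N-1)))⁻¹ := by
            rw [hr1, ← Real.rpow_natCast (R k / 2^N) N,
              ← Real.rpow_mul (div_pos (hRpos k) (by positivity)).le,
              show (N:ℝ) * (((N:ℝ)-1)/(N:ℝ)) = (N:ℝ)-1 by field_simp,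
              show ((N:ℝ)-1) = ((N-1 : ℕ):ℝ) by push_cast [Nat.cast_sub (by omega : 1 ≤ N)]; ring,
              Real.rpow_natCast, div_pow, ← pow_mul]
            field_simp
          rw [hBpow, hApow]
          have haaX : aa N k * (R k)^(N-1 : ℕ) = 2^(N-1 : ℕ) := by
            simp only [hR]
            exact aa_mul_pow (by omega) k
          have h1 : (2:ℝ) ≤ 2^(N-1 : ℕ) := by
            calc (2:ℝ) = 2^1 := (pow_one 2).symm
              _ ≤ 2^(N-1 : ℕ) := pow_le_pow_right₀ one_le_two (by omega)
          have h2 : ((2:ℝ)^(N*(N-1)))⁻¹ ≤ 1/2 := by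
            rw [one_div]
            refine inv_anti₀ two_pos ?_
            calc (2:ℝ) = 2^1 := (pow_one 2).symm
              _ ≤ 2^(N*(N-1)) := pow_le_pow_right₀ one_le_two
                (Nat.one_le_iff_ne_zero.2 (by
                  have h1N : 1 ≤ N - 1 := by omega
                  have := Nat.mul_le_mul (show 1 ≤ N by omega) h1N
                  omega))
          have harr : c * (((R k)^(N-1 : ℕ) - (R k)^(N-1 : ℕ) * ((2:ℝ)^(N*(N-1)))⁻¹)/(r+1))
              = ((n:ℝ)+1)⁻¹ * ((aa N k * (R k)^(N-1 : ℕ)) * ((1 - ((2:ℝ)^(N*(N-1)))⁻¹)/(r+1))) := by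
            rw [hc]; ring
          rw [harr, haaX]
          refine le_mul_of_one_le_right (by positivity) ?_
          rw [← mul_div_assoc, le_div_iff₀ hr1pos, one_mul]
          have hεnn : (0:ℝ) ≤ 1 - ((2:ℝ)^(N*(N-1)))⁻¹ := by linarith [h2]
          have h4 : 2 * (1 - ((2:ℝ)^(N*(N-1)))⁻¹) ≤ 2^(N-1:ℕ) * (1 - ((2:ℝ)^(N*(N-1)))⁻¹) :=
            mul_le_mul_of_nonneg_right h1 hεnn
          calc r + 1 ≤ 1 := hr1le
            _ ≤ 2 * (1 - ((2:ℝ)^(N*(N-1)))⁻¹) := by linarith [h2]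
            _ ≤ 2^(N-1:ℕ) * (1 - ((2:ℝ)^(N*(N-1)))⁻¹) := h4
        -- assemble
        calc ENNReal.ofReal (((n:ℝ)+1)⁻¹) ≤ ENNReal.ofReal (∫ t in I k, c * t^r) :=
              ENNReal.ofReal_le_ofReal hval
          _ = ∫⁻ t in I k, ENNReal.ofReal (c * t^r) :=
              ofReal_integral_eq_lintegral_ofReal hint hnn
          _ ≤ ∫⁻ t in I k, ENNReal.ofReal (t^(1/p) * rearr N (uu N n) t / t) := by
              refine lintegral_mono_ae ((ae_restrict_iff' measurableSet_Ioo).2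
                (Filter.Eventually.of_forall fun t ht => ?_))
              have ht0 : 0 < t := lt_trans (hIpos k) ht.1
              apply ENNReal.ofReal_le_ofReal
              have hre : ((n:ℝ)+1)⁻¹ * aa N k ≤ rearr N (uu N n) t := by
                refine rearr_ge (by omega) n k hk' ?_
                have := ht.2
                simp only [hR] at this
                exact this
              have htp : t^r = t^(1/p)/t := by
                rw [hrdef, ← hp, Real.rpow_sub ht0, Real.rpow_one]
              have hrw : t^(1/p) * rearr N (uu N n) t / t
                  = rearr N (uu N n) t * (t^(1/p)/t) := by ring
              rw [hrw, htp, hc]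
              exact mul_le_mul_of_nonneg_right hre (by positivity)
    _ = ∫⁻ t in ⋃ k ∈ Finset.range (n+1), I k,
          ENNReal.ofReal (t^(1/p) * rearr N (uu N n) t / t) :=
        (lintegral_biUnion_finset hdisj (fun k _ => measurableSet_Ioo) _).symm
    _ ≤ ∫⁻ t in Set.Ioi (0:ℝ), ENNReal.ofReal (t^(1/p) * rearr N (uu N n) t / t) :=
        lintegral_mono_set hsub

end NCC

/-- the embedding `BV̇(ℝ^N) ↪ L^{1*,1}(ℝ^N)` is NOT cocompact with
respect to the rescaling group `D`: there is a bounded sequence in `BV̇(ℝ^N)` which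
is `D`-vanishing but does not tend to `0` in `L^{1*,1}(ℝ^N)`. -/
theorem not_cocompact_BVdot_into_L1star1
    (N : ℕ) (hN : 2 ≤ N) :
    ∃ u : ℕ → Euc N → ℝ,
      (∀ n, MemBVdot N (u n)) ∧
      (∃ C : ℝ≥0∞, C ≠ ∞ ∧ ∀ n, TV N (u n) univ ≤ C) ∧
      (∀ (j : ℕ → ℤ) (y : ℕ → Euc N),
        WeakBVconv N (fun n => resc N (j n) (y n) (u n)) 0) ∧
      ¬ Tendsto (fun n => lorentz N ((N : ℝ) / ((N : ℝ) - 1)) 1 (u n)) atTop (𝓝 0) := by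
  have hN1 : 1 ≤ N := by omega
  refine ⟨fun n => NCC.uu N n, fun n => NCC.memBVdot_uu hN1 n,
    ⟨ENNReal.ofReal (2 * N * 2^(N-1)), ENNReal.ofReal_ne_top, fun n => NCC.TV_uu_le hN1 n⟩,
    fun j y => NCC.weakconv hN j y, ?_⟩
  intro hT
  have h1 := hT.eventually_lt_const (show (0:ℝ≥0∞) < 1 by norm_num)
  obtain ⟨n, hn⟩ := h1.exists
  exact absurd (NCC.lorentz_ge_one hN n) (not_le.2 hn)
end
end
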